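/- arXiv:2011.00919 — 8 statements merged into one kernel-verified Lean document; each statement's English description precedes it below -/
import Mathlib

section
/- For every z ∈ ℂ with Im z ≠ 0, the function δ satisfies the two-sided bound (1 − c)^{1/2} ≤ |δ(z)| ≤ (1 − c)^{−1/2}. -/
/-!
Since `ν` is real, `|δ z| = exp (-Im ∫ ν(ξ) / (ξ - z) dξ)`, and the imaginary part of the Cauchy
kernel `1 / (ξ - z)` is `Im z` times the Poisson kernel `1 / ((ξ - Re z)² + (Im z)²)`, whose
integral over the whole line is `π / |Im z|`. With `0 ≤ ν ≤ -log (1 - c) / (2π)` this gives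
`|Im ∫ ν(ξ) / (ξ - z) dξ| ≤ -log (1 - c) / 2`, i.e. `√(1 - c) ≤ |δ z| ≤ 1 / √(1 - c)`.
-/

open MeasureTheory Real

noncomputable def cauchyTransform (s : Set ℝ) (ν : ℝ → ℝ) (z : ℂ) : ℂ :=
  ∫ ξ in s, (ν ξ : ℂ) / ((ξ : ℂ) - z)

-- Also true for `b = 0`, where both sides are `0`.
lemma div_sub_sq_add_sq_eq (a b x : ℝ) :
    b / ((x - a) ^ 2 + b ^ 2) = b⁻¹ * (1 + (b⁻¹ * (x - a)) ^ 2)⁻¹ := by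
  rcases eq_or_ne b 0 with rfl | hb
  · simp
  · field_simp
    ring

lemma integrable_div_sub_sq_add_sq (a b : ℝ) :
    Integrable fun x : ℝ => b / ((x - a) ^ 2 + b ^ 2) := by
  simp_rw [div_sub_sq_add_sq_eq a b]
  rcases eq_or_ne b 0 with rfl | hb
  · simp
  · have := integrable_inv_one_add_sq.comp_mul_left' (inv_ne_zero hb)
    exact (this.comp_sub_right a).const_mul _

lemma integral_div_sub_sq_add_sq (a : ℝ) {b : ℝ} (hb : 0 < b) :
    ∫ x : ℝ, b / ((x - a) ^ 2 + b ^ 2) = π := by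
  simp_rw [div_sub_sq_add_sq_eq a b]
  rw [integral_const_mul,
    integral_sub_right_eq_self (fun x => (1 + (b⁻¹ * x) ^ 2)⁻¹) a,
    Measure.integral_comp_mul_left (fun y : ℝ => (1 + y ^ 2)⁻¹), integral_univ_inv_one_add_sq,
    inv_inv, abs_of_pos hb, smul_eq_mul, inv_mul_cancel_left₀ hb.ne']

lemma im_ofReal_div_ofReal_sub (t ξ : ℝ) (z : ℂ) :
    ((t : ℂ) / ((ξ : ℂ) - z)).im = t * z.im / ((ξ - z.re) ^ 2 + z.im ^ 2) := by
  rw [Complex.div_im, Complex.normSq_apply]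
  simp only [Complex.ofReal_re, Complex.ofReal_im, Complex.sub_re, Complex.sub_im]
  ring

lemma integrableOn_ofReal_div_sub {s : Set ℝ} {ν : ℝ → ℝ} (hν : IntegrableOn ν s) {z : ℂ}
    (hz : z.im ≠ 0) : IntegrableOn (fun ξ : ℝ => (ν ξ : ℂ) / ((ξ : ℂ) - z)) s := by
  have hbound : ∀ ξ : ℝ, ‖((ξ : ℂ) - z)⁻¹‖ ≤ |z.im|⁻¹ := fun ξ => by
    rw [norm_inv]
    refine inv_anti₀ (abs_pos.mpr hz) ?_
    simpa using Complex.abs_im_le_norm ((ξ : ℂ) - z)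
  exact hν.ofReal.mul_bdd (by fun_prop) (.of_forall hbound)

lemma abs_im_cauchyTransform_le {s : Set ℝ} {ν : ℝ → ℝ} {K : ℝ} (hν : IntegrableOn ν s)
    (hK : ∀ ξ, |ν ξ| ≤ K) {z : ℂ} (hz : z.im ≠ 0) :
    |(cauchyTransform s ν z).im| ≤ π * K := by
  set P : ℝ → ℝ := fun ξ => |z.im| / ((ξ - z.re) ^ 2 + z.im ^ 2)
  have hP0 : ∀ ξ, 0 ≤ P ξ := fun ξ => by positivity
  have hPint : Integrable P := by
    simpa [P, sq_abs] using integrable_div_sub_sq_add_sq z.re |z.im|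
  have hPπ : ∫ ξ, P ξ = π := by
    simpa [P, sq_abs] using integral_div_sub_sq_add_sq z.re (abs_pos.mpr hz)
  have hpointwise : ∀ ξ : ℝ, |((ν ξ : ℂ) / ((ξ : ℂ) - z)).im| ≤ K * P ξ := fun ξ => by
    have hden : 0 < (ξ - z.re) ^ 2 + z.im ^ 2 := by positivity
    rw [im_ofReal_div_ofReal_sub, abs_div, abs_mul, abs_of_pos hden, mul_div_assoc]
    exact mul_le_mul_of_nonneg_right (hK ξ) (hP0 ξ)
  have hK0 : 0 ≤ K := (abs_nonneg _).trans (hK 0)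
  have hint := integrableOn_ofReal_div_sub hν hz
  calc |(cauchyTransform s ν z).im|
      = |∫ ξ in s, ((ν ξ : ℂ) / ((ξ : ℂ) - z)).im| := congrArg abs (integral_im hint).symm
    _ ≤ ∫ ξ in s, |((ν ξ : ℂ) / ((ξ : ℂ) - z)).im| := abs_integral_le_integral_abs
    _ ≤ ∫ ξ in s, K * P ξ :=
      integral_mono hint.im.abs (hPint.integrableOn.const_mul K) hpointwise
    _ ≤ ∫ ξ, K * P ξ :=
      setIntegral_le_integral (hPint.const_mul K) (.of_forall fun ξ => mul_nonneg hK0 (hP0 ξ))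
    _ = π * K := by rw [integral_const_mul, hPπ, mul_comm]

lemma abs_log_one_sub_le {x c : ℝ} (hx0 : 0 ≤ x) (hxc : x ≤ c) (hc : c < 1) :
    |log (1 - x)| ≤ -log (1 - c) := by
  rw [abs_of_nonpos (log_nonpos (by linarith) (by linarith)), neg_le_neg_iff]
  exact log_le_log (by linarith) (by linarith)

lemma sqrt_le_exp_and_exp_le_inv_sqrt {x t : ℝ} (hx : 0 < x) (ht : |t| ≤ -log x / 2) :
    √x ≤ exp t ∧ exp t ≤ (√x)⁻¹ := by
  have hsqrt : √x = exp (log x / 2) := by rw [exp_half, exp_log hx]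
  rw [hsqrt, ← exp_neg, exp_le_exp, exp_le_exp]
  constructor <;> linarith [abs_le.mp ht]

lemma norm_exp_I_mul (w : ℂ) : ‖Complex.exp (Complex.I * w)‖ = exp (-w.im) := by
  simp [Complex.norm_exp]

theorem delta_uniform_bound_general
    (c : ℝ) (hc1 : c < 1) (z₀ : ℝ)
    (ρ : ℝ → ℝ)
    (hρ : ∀ ξ : ℝ, 0 ≤ ρ ξ ∧ ρ ξ ≤ c)
    (hint : IntegrableOn (fun ξ : ℝ => Real.log (1 - ρ ξ)) (Set.Iio z₀))
    (ν : ℝ → ℝ) (hν : ∀ ξ : ℝ, ν ξ = -(1 / (2 * Real.pi)) * Real.log (1 - ρ ξ))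
    (δ : ℂ → ℂ)
    (hδ : ∀ z : ℂ, δ z =
      Complex.exp (Complex.I * ∫ ξ in Set.Iio z₀, (ν ξ : ℂ) / ((ξ : ℂ) - z)))
    (z : ℂ) (hz : z.im ≠ 0) :
    Real.sqrt (1 - c) ≤ ‖δ z‖ ∧
      ‖δ z‖ ≤ (Real.sqrt (1 - c))⁻¹ := by
  have hνK : ∀ ξ, |ν ξ| ≤ 1 / (2 * π) * -log (1 - c) := fun ξ => by
    rw [hν, abs_mul, abs_neg, abs_of_pos (by positivity)]
    exact mul_le_mul_of_nonneg_left (abs_log_one_sub_le (hρ ξ).1 (hρ ξ).2 hc1) (by positivity)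
  have hνint : IntegrableOn ν (Set.Iio z₀) :=
    IntegrableOn.congr_fun (hint.const_mul _) (fun ξ _ => (hν ξ).symm) measurableSet_Iio
  have hδz : ‖δ z‖ = exp (-(cauchyTransform (Set.Iio z₀) ν z).im) := by
    rw [hδ, norm_exp_I_mul, cauchyTransform]
  rw [hδz]
  refine sqrt_le_exp_and_exp_le_inv_sqrt (by linarith) ?_
  calc |-(cauchyTransform (Set.Iio z₀) ν z).im|
      ≤ π * (1 / (2 * π) * -log (1 - c)) := by
        rw [abs_neg]
        exact abs_im_cauchyTransform_le hνint hνK hz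
    _ = -log (1 - c) / 2 := by field_simp

/-- Theorem 4.1(i): the scalar RH solution δ is uniformly bounded:
(1-c)^{1/2} ≤ |δ(z)| ≤ (1-c)^{-1/2} for Im z ≠ 0. -/
theorem delta_uniform_bound
    (c : ℝ) (hc0 : 0 ≤ c) (hc1 : c < 1) (z₀ : ℝ)
    (ρ : ℝ → ℝ) (hρm : Measurable ρ)
    (hρ : ∀ ξ : ℝ, 0 ≤ ρ ξ ∧ ρ ξ ≤ c)
    (hint : IntegrableOn (fun ξ : ℝ => Real.log (1 - ρ ξ)) (Set.Iio z₀))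
    (ν : ℝ → ℝ) (hν : ∀ ξ : ℝ, ν ξ = -(1 / (2 * Real.pi)) * Real.log (1 - ρ ξ))
    (δ : ℂ → ℂ)
    (hδ : ∀ z : ℂ, δ z =
      Complex.exp (Complex.I * ∫ ξ in Set.Iio z₀, (ν ξ : ℂ) / ((ξ : ℂ) - z)))
    (z : ℂ) (hz : z.im ≠ 0) :
    Real.sqrt (1 - c) ≤ ‖δ z‖ ∧
      ‖δ z‖ ≤ (Real.sqrt (1 - c))⁻¹ :=
  delta_uniform_bound_general c hc1 z₀ ρ hρ hint ν hν δ hδ z hz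
end

section
/- Assume in addition that there is a constant K ≥ 0 with |ν(ξ) − ν(z₀)| ≤ K (z₀ − ξ)^{1/2} for all ξ ∈ (z₀ − 1, z₀), where ν(z₀) = −(1/(2π)) log(1 − ρ(z₀)). Define, for z = z₀ + s e^{iφ} with s > 0 and φ ∈ (0, π), β(z, z₀) = −ν(z₀)·Log(z − z₀ + 1) + ∫_{ξ ∈ (−∞, z₀)} ( ν(ξ) − χ(ξ) ν(z₀) )/(ξ − z) dξ, where χ is the indicator function of the interval (z₀ − 1, z₀) and Log is the principal branch of the complex logarithm; define β(z₀, z₀) by the same formula with z replaced by z₀ (the integral converges absolutely by the Hölder assumption). Then for each fixed angle φ ∈ (0, π) there exists a constant C > 0 such that for all s ∈ (0, 1/2], | β(z₀ + s e^{iφ}, z₀) − β(z₀, z₀) | ≤ C s^{1/2}. -/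
/-!
Write `f = ν - χ ν(z₀)`, `t = z₀ - ξ` and `s = |z - z₀|`. Then
`|f(ξ)/(ξ - z) - f(ξ)/(ξ - z₀)| = |f(ξ)| s / (|ξ - z| t)`, and for `z` on the ray of angle `φ`
the law of cosines gives `|ξ - z| ≥ cos (φ/2) (s + t)`. Split the half-line at `t = s` and
`t = 1`. For `t < s` the Hölder bound `|f| ≤ K √t` dominates the integrand by
`K t^(-1/2) / cos (φ/2)`, of mass `2K√s / cos (φ/2)`; for `s ≤ t ≤ 1` by
`K s t^(-3/2) / cos (φ/2)`, of mass at most `2K√s / cos (φ/2)`; for `t ≥ 1` by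
`s |f| / cos (φ/2)`, so that piece is `O(s)`. The logarithmic term is also `O(s)`.
-/

open MeasureTheory Set Real
open scoped Complex

section
variable {z₀ r a b s : ℝ}

lemma integral_Ioo_sub_rpow (hr : -1 < r) (hs : 0 ≤ s) :
    ∫ ξ in Ioo (z₀ - s) z₀, (z₀ - ξ) ^ r = s ^ (r + 1) / (r + 1) := by
  rw [← integral_Ioc_eq_integral_Ioo, ← intervalIntegral.integral_of_le (by linarith),
    intervalIntegral.integral_comp_sub_left (· ^ r), sub_self, sub_sub_cancel,
    integral_rpow (Or.inl hr), zero_rpow (by linarith), sub_zero]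

lemma integrableOn_Ioo_sub_rpow (hr : -1 < r) (hs : 0 ≤ s) :
    IntegrableOn (fun ξ ↦ (z₀ - ξ) ^ r) (Ioo (z₀ - s) z₀) := by
  have h := (intervalIntegral.intervalIntegrable_rpow' (a := 0) (b := s) hr).comp_sub_left z₀
  rw [sub_zero] at h
  exact (intervalIntegrable_iff_integrableOn_Ioo_of_le (by linarith)).mp h.symm

lemma integral_Ioc_sub_rpow (hr : r ≠ -1) (ha : 0 < a) (hab : a ≤ b) :
    ∫ ξ in Ioc (z₀ - b) (z₀ - a), (z₀ - ξ) ^ r = (b ^ (r + 1) - a ^ (r + 1)) / (r + 1) := by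
  rw [← intervalIntegral.integral_of_le (by linarith),
    intervalIntegral.integral_comp_sub_left (· ^ r), sub_sub_cancel, sub_sub_cancel,
    integral_rpow (Or.inr ⟨hr, notMem_uIcc_of_lt ha (ha.trans_le hab)⟩)]

lemma integrableOn_Ioc_sub_rpow (ha : 0 < a) (hab : a ≤ b) :
    IntegrableOn (fun ξ ↦ (z₀ - ξ) ^ r) (Ioc (z₀ - b) (z₀ - a)) := by
  have h := (intervalIntegral.intervalIntegrable_rpow (r := r)
    (Or.inr (notMem_uIcc_of_lt ha (ha.trans_le hab)))).comp_sub_left z₀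
  exact (intervalIntegrable_iff_integrableOn_Ioc_of_le (by linarith)).mp h.symm
end

lemma sqrt_div_self_eq_rpow {t : ℝ} (ht : 0 ≤ t) : √t / t = t ^ (-(1 / 2) : ℝ) := by
  rw [sqrt_div_self, sqrt_eq_rpow, rpow_neg ht]

lemma setIntegral_Iio_eq_Iic_add_Ioc_add_Ioo {E : Type*} [NormedAddCommGroup E]
    [NormedSpace ℝ E] {g : ℝ → E} {a₁ a₂ b : ℝ} (hg : IntegrableOn g (Iio b))
    (h₁₂ : a₁ ≤ a₂) (h₂ : a₂ < b) :
    ∫ ξ in Iio b, g ξ =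
      (∫ ξ in Iic a₁, g ξ) + (∫ ξ in Ioc a₁ a₂, g ξ) + ∫ ξ in Ioo a₂ b, g ξ := by
  have hIic : Iic a₂ ⊆ Iio b := Iic_subset_Iio.mpr h₂
  rw [← Iic_union_Ioo_eq_Iio h₂,
    setIntegral_union ((Iic_disjoint_Ioi le_rfl).mono_right Ioo_subset_Ioi_self)
      measurableSet_Ioo (hg.mono_set hIic) (hg.mono_set Ioo_subset_Iio_self),
    ← Iic_union_Ioc_eq_Iic h₁₂,
    setIntegral_union (Iic_disjoint_Ioc le_rfl) measurableSet_Ioc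
      (hg.mono_set (Iic_subset_Iio.mpr (h₁₂.trans_lt h₂)))
      (hg.mono_set fun _ hx ↦ hx.2.trans_lt h₂)]

lemma cos_half_mul_le_norm_sub (ξ z₀ s φ : ℝ) :
    cos (φ / 2) * (s + (z₀ - ξ)) ≤ ‖(ξ : ℂ) - (z₀ + s * cexp (φ * Complex.I))‖ := by
  have hcos : cos (φ / 2) ^ 2 = (1 + cos φ) / 2 := by
    rw [cos_sq, show 2 * (φ / 2) = φ by ring]; ring
  have hnorm : ‖(ξ : ℂ) - (z₀ + s * cexp (φ * Complex.I))‖ ^ 2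
      = (z₀ - ξ) ^ 2 + s ^ 2 + 2 * s * (z₀ - ξ) * cos φ := by
    rw [Complex.sq_norm, Complex.normSq_apply]
    simp only [Complex.sub_re, Complex.add_re, Complex.mul_re, Complex.sub_im, Complex.add_im,
      Complex.mul_im, Complex.ofReal_re, Complex.ofReal_im, Complex.exp_ofReal_mul_I_re,
      Complex.exp_ofReal_mul_I_im]
    linear_combination s ^ 2 * sin_sq_add_cos_sq φ
  -- `‖ξ - z‖² - cos² (φ/2) (s + t)² = sin² (φ/2) (s - t)²`, where `t = z₀ - ξ`
  refine le_of_sq_le_sq ?_ (norm_nonneg _)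
  rw [hnorm, mul_pow, hcos]
  nlinarith [sq_nonneg (s - (z₀ - ξ)), cos_le_one φ]

noncomputable def cauchyTransformIio (f : ℝ → ℝ) (z₀ : ℝ) (z : ℂ) : ℂ :=
  ∫ ξ in Iio z₀, (f ξ : ℂ) / (ξ - z)

section
variable {f : ℝ → ℝ} {z₀ K κ ξ : ℝ} {z : ℂ}

lemma integrableOn_abs_div_sub (hf : IntegrableOn f (Iio z₀))
    (hfK : ∀ ξ ∈ Ioo (z₀ - 1) z₀, |f ξ| ≤ K * √(z₀ - ξ)) :
    IntegrableOn (fun ξ ↦ |f ξ| / (z₀ - ξ)) (Iio z₀) := by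
  have hmeas : ∀ S ⊆ Iio z₀,
      AEStronglyMeasurable (fun ξ ↦ |f ξ| / (z₀ - ξ)) (volume.restrict S) := fun S hS ↦
    ((hf.mono_set hS).aemeasurable.abs.div
      (measurable_const.sub measurable_id).aemeasurable).aestronglyMeasurable
  have hIic : Iic (z₀ - 1) ⊆ Iio z₀ := Iic_subset_Iio.mpr (sub_one_lt z₀)
  rw [← Iic_union_Ioo_eq_Iio (sub_one_lt z₀)]
  refine IntegrableOn.union ?_ ?_
  · refine Integrable.mono' (hf.mono_set hIic).abs (hmeas _ hIic)
      ((ae_restrict_iff' measurableSet_Iic).mpr (ae_of_all _ fun ξ hξ ↦ ?_))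
    have ht : 1 ≤ z₀ - ξ := by linarith [mem_Iic.mp hξ]
    rw [norm_div, norm_abs_eq_norm, Real.norm_eq_abs, Real.norm_eq_abs,
      abs_of_pos (by linarith : 0 < z₀ - ξ)]
    exact div_le_self (abs_nonneg _) ht
  · refine Integrable.mono'
      ((integrableOn_Ioo_sub_rpow (r := -(1 / 2)) (by norm_num) zero_le_one).const_mul K)
      (hmeas _ fun ξ hξ ↦ hξ.2)
      ((ae_restrict_iff' measurableSet_Ioo).mpr (ae_of_all _ fun ξ hξ ↦ ?_))
    have ht : 0 < z₀ - ξ := sub_pos.mpr hξ.2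
    rw [norm_div, norm_abs_eq_norm, Real.norm_eq_abs, Real.norm_eq_abs, abs_of_pos ht,
      ← sqrt_div_self_eq_rpow ht.le, ← mul_div_assoc]
    gcongr
    exact hfK ξ hξ

lemma integrableOn_div_sub (hf : IntegrableOn f (Iio z₀))
    (hfK : ∀ ξ ∈ Ioo (z₀ - 1) z₀, |f ξ| ≤ K * √(z₀ - ξ)) (hκ : 0 < κ)
    (hz : ∀ ξ < z₀, κ * (z₀ - ξ) ≤ ‖(ξ : ℂ) - z‖) :
    IntegrableOn (fun ξ ↦ (f ξ : ℂ) / (ξ - z)) (Iio z₀) := by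
  refine Integrable.mono' ((integrableOn_abs_div_sub hf hfK).div_const κ)
    ((Complex.measurable_ofReal.comp_aemeasurable hf.aemeasurable).div
      (Complex.measurable_ofReal.sub measurable_const).aemeasurable).aestronglyMeasurable
    ((ae_restrict_iff' measurableSet_Iio).mpr (ae_of_all _ fun ξ hξ ↦ ?_))
  have ht : 0 < z₀ - ξ := sub_pos.mpr hξ
  rw [norm_div, Complex.norm_real, Real.norm_eq_abs, div_div, mul_comm (z₀ - ξ)]
  gcongr
  exact hz ξ hξ

lemma norm_div_sub_sub_div_sub_le (a : ℝ) (hκ : 0 < κ) (hξ : ξ < z₀)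
    (hz : κ * (‖z - z₀‖ + (z₀ - ξ)) ≤ ‖(ξ : ℂ) - z‖) :
    ‖(a : ℂ) / (ξ - z) - a / (ξ - z₀)‖ ≤
      |a| * ‖z - z₀‖ / (κ * (‖z - z₀‖ + (z₀ - ξ)) * (z₀ - ξ)) := by
  have ht : 0 < z₀ - ξ := sub_pos.mpr hξ
  have hz_ne : (ξ : ℂ) - z ≠ 0 :=
    norm_pos_iff.mp ((by positivity : 0 < κ * (‖z - z₀‖ + (z₀ - ξ))).trans_le hz)
  have hnorm₀ : ‖(ξ : ℂ) - z₀‖ = z₀ - ξ := by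
    rw [← Complex.ofReal_sub, Complex.norm_real, Real.norm_eq_abs, abs_sub_comm, abs_of_pos ht]
  have hz₀_ne : (ξ : ℂ) - z₀ ≠ 0 := norm_pos_iff.mp (hnorm₀ ▸ ht)
  rw [div_sub_div _ _ hz_ne hz₀_ne,
    show (a : ℂ) * (ξ - z₀) - (ξ - z) * a = a * (z - z₀) by ring, norm_div, norm_mul, norm_mul,
    Complex.norm_real, Real.norm_eq_abs, hnorm₀]
  gcongr

lemma setIntegral_Ioo_norm_div_sub_sub_div_sub_le
    (hfK : ∀ ξ ∈ Ioo (z₀ - 1) z₀, |f ξ| ≤ K * √(z₀ - ξ)) (hκ : 0 < κ)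
    (hz : ∀ ξ < z₀, κ * (‖z - z₀‖ + (z₀ - ξ)) ≤ ‖(ξ : ℂ) - z‖)
    (hN : IntegrableOn (fun ξ ↦ ‖(f ξ : ℂ) / (ξ - z) - f ξ / (ξ - z₀)‖) (Iio z₀))
    (hz₁ : ‖z - z₀‖ ≤ 1) :
    ∫ ξ in Ioo (z₀ - ‖z - z₀‖) z₀, ‖(f ξ : ℂ) / (ξ - z) - f ξ / (ξ - z₀)‖ ≤
      2 * K / κ * √‖z - z₀‖ := by
  set s := ‖z - z₀‖
  have hbound : ∀ ξ ∈ Ioo (z₀ - s) z₀,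
      ‖(f ξ : ℂ) / (ξ - z) - f ξ / (ξ - z₀)‖ ≤ K / κ * (z₀ - ξ) ^ (-(1 / 2) : ℝ) := by
    intro ξ ⟨hξs, hξ⟩
    have ht : 0 < z₀ - ξ := sub_pos.mpr hξ
    calc ‖(f ξ : ℂ) / (ξ - z) - f ξ / (ξ - z₀)‖
        ≤ |f ξ| * s / (κ * (s + (z₀ - ξ)) * (z₀ - ξ)) :=
          norm_div_sub_sub_div_sub_le _ hκ hξ (hz ξ hξ)
      _ = |f ξ| / (κ * (z₀ - ξ)) * (s / (s + (z₀ - ξ))) := by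
          field_simp
      _ ≤ |f ξ| / (κ * (z₀ - ξ)) := mul_le_of_le_one_right (by positivity)
          (div_le_one_of_le₀ (by linarith) (by positivity))
      _ ≤ K * √(z₀ - ξ) / (κ * (z₀ - ξ)) := by
          gcongr
          exact hfK ξ ⟨by linarith, hξ⟩
      _ = K / κ * (√(z₀ - ξ) / (z₀ - ξ)) := mul_div_mul_comm _ _ _ _
      _ = K / κ * (z₀ - ξ) ^ (-(1 / 2) : ℝ) := by rw [sqrt_div_self_eq_rpow ht.le]
  calc ∫ ξ in Ioo (z₀ - s) z₀, ‖(f ξ : ℂ) / (ξ - z) - f ξ / (ξ - z₀)‖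
      ≤ ∫ ξ in Ioo (z₀ - s) z₀, K / κ * (z₀ - ξ) ^ (-(1 / 2) : ℝ) :=
        setIntegral_mono_on (hN.mono_set fun ξ hξ ↦ hξ.2)
          ((integrableOn_Ioo_sub_rpow (by norm_num) (norm_nonneg _)).const_mul _)
          measurableSet_Ioo hbound
    _ = 2 * K / κ * √s := by
        rw [integral_const_mul, integral_Ioo_sub_rpow (by norm_num) (norm_nonneg _), sqrt_eq_rpow]
        norm_num
        ring

lemma setIntegral_Ioc_norm_div_sub_sub_div_sub_le
    (hfK : ∀ ξ ∈ Ioo (z₀ - 1) z₀, |f ξ| ≤ K * √(z₀ - ξ)) (hK : 0 ≤ K) (hκ : 0 < κ)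
    (hz : ∀ ξ < z₀, κ * (‖z - z₀‖ + (z₀ - ξ)) ≤ ‖(ξ : ℂ) - z‖)
    (hN : IntegrableOn (fun ξ ↦ ‖(f ξ : ℂ) / (ξ - z) - f ξ / (ξ - z₀)‖) (Iio z₀))
    (hz₀ : z ≠ z₀) (hz₁ : ‖z - z₀‖ ≤ 1) :
    ∫ ξ in Ioc (z₀ - 1) (z₀ - ‖z - z₀‖), ‖(f ξ : ℂ) / (ξ - z) - f ξ / (ξ - z₀)‖ ≤
      2 * K / κ * √‖z - z₀‖ := by
  set s := ‖z - z₀‖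
  have hs : 0 < s := norm_pos_iff.mpr (sub_ne_zero.mpr hz₀)
  have hbound : ∀ ξ ∈ Ioc (z₀ - 1) (z₀ - s),
      ‖(f ξ : ℂ) / (ξ - z) - f ξ / (ξ - z₀)‖ ≤ K * s / κ * (z₀ - ξ) ^ (-(3 / 2) : ℝ) := by
    intro ξ ⟨hξ₁, hξs⟩
    have ht : 0 < z₀ - ξ := by linarith
    calc ‖(f ξ : ℂ) / (ξ - z) - f ξ / (ξ - z₀)‖
        ≤ |f ξ| * s / (κ * (s + (z₀ - ξ)) * (z₀ - ξ)) :=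
          norm_div_sub_sub_div_sub_le _ hκ (by linarith) (hz ξ (by linarith))
      _ ≤ K * √(z₀ - ξ) * s / (κ * (z₀ - ξ) * (z₀ - ξ)) := by
          gcongr
          · exact hfK ξ ⟨hξ₁, by linarith⟩
          · linarith
      _ = K * s / κ * (√(z₀ - ξ) / (z₀ - ξ) / (z₀ - ξ)) := by
          field_simp
      _ = K * s / κ * (z₀ - ξ) ^ (-(3 / 2) : ℝ) := by
          rw [sqrt_div_self_eq_rpow ht.le, ← rpow_sub_one ht.ne']
          norm_num
  calc ∫ ξ in Ioc (z₀ - 1) (z₀ - s), ‖(f ξ : ℂ) / (ξ - z) - f ξ / (ξ - z₀)‖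
      ≤ ∫ ξ in Ioc (z₀ - 1) (z₀ - s), K * s / κ * (z₀ - ξ) ^ (-(3 / 2) : ℝ) :=
        setIntegral_mono_on (hN.mono_set fun ξ hξ ↦ show ξ < z₀ by linarith [hξ.2])
          ((integrableOn_Ioc_sub_rpow hs hz₁).const_mul _) measurableSet_Ioc hbound
    _ = K * s / κ * (2 * (√s)⁻¹ - 2) := by
        rw [integral_const_mul, integral_Ioc_sub_rpow (by norm_num) hs hz₁, one_rpow,
          show (-(3 / 2) + 1 : ℝ) = -(1 / 2) by norm_num, rpow_neg hs.le, ← sqrt_eq_rpow]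
        ring
    _ ≤ K * s / κ * (2 * (√s)⁻¹) := by gcongr; linarith
    _ = 2 * K / κ * (s / √s) := by ring
    _ = 2 * K / κ * √s := by rw [div_sqrt]

lemma setIntegral_Iic_norm_div_sub_sub_div_sub_le (hf : IntegrableOn f (Iio z₀)) (hκ : 0 < κ)
    (hz : ∀ ξ < z₀, κ * (‖z - z₀‖ + (z₀ - ξ)) ≤ ‖(ξ : ℂ) - z‖)
    (hN : IntegrableOn (fun ξ ↦ ‖(f ξ : ℂ) / (ξ - z) - f ξ / (ξ - z₀)‖) (Iio z₀))
    (hz₁ : ‖z - z₀‖ ≤ 1) :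
    ∫ ξ in Iic (z₀ - 1), ‖(f ξ : ℂ) / (ξ - z) - f ξ / (ξ - z₀)‖ ≤
      (∫ ξ in Iic (z₀ - 1), |f ξ|) / κ * √‖z - z₀‖ := by
  set s := ‖z - z₀‖
  have hIic : Iic (z₀ - 1) ⊆ Iio z₀ := Iic_subset_Iio.mpr (sub_one_lt z₀)
  have hbound : ∀ ξ ∈ Iic (z₀ - 1),
      ‖(f ξ : ℂ) / (ξ - z) - f ξ / (ξ - z₀)‖ ≤ s / κ * |f ξ| := by
    intro ξ hξ
    have ht : 1 ≤ z₀ - ξ := by linarith [mem_Iic.mp hξ]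
    calc ‖(f ξ : ℂ) / (ξ - z) - f ξ / (ξ - z₀)‖
        ≤ |f ξ| * s / (κ * (s + (z₀ - ξ)) * (z₀ - ξ)) :=
          norm_div_sub_sub_div_sub_le _ hκ (by linarith) (hz ξ (by linarith))
      _ ≤ |f ξ| * s / (κ * 1) := by
          gcongr
          nlinarith [norm_nonneg (z - z₀)]
      _ = s / κ * |f ξ| := by ring
  calc ∫ ξ in Iic (z₀ - 1), ‖(f ξ : ℂ) / (ξ - z) - f ξ / (ξ - z₀)‖
      ≤ ∫ ξ in Iic (z₀ - 1), s / κ * |f ξ| :=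
        setIntegral_mono_on (hN.mono_set hIic) ((hf.mono_set hIic).abs.const_mul _)
          measurableSet_Iic hbound
    _ = (∫ ξ in Iic (z₀ - 1), |f ξ|) / κ * s := by rw [integral_const_mul]; ring
    _ ≤ (∫ ξ in Iic (z₀ - 1), |f ξ|) / κ * √s := by
        gcongr
        exact le_sqrt_self_iff.mpr hz₁

theorem norm_cauchyTransformIio_sub_le (hf : IntegrableOn f (Iio z₀))
    (hfK : ∀ ξ ∈ Ioo (z₀ - 1) z₀, |f ξ| ≤ K * √(z₀ - ξ)) (hK : 0 ≤ K) (hκ : 0 < κ)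
    (hz : ∀ ξ < z₀, κ * (‖z - z₀‖ + (z₀ - ξ)) ≤ ‖(ξ : ℂ) - z‖) (hz₁ : ‖z - z₀‖ ≤ 1) :
    ‖cauchyTransformIio f z₀ z - cauchyTransformIio f z₀ z₀‖ ≤
      ((∫ ξ in Iic (z₀ - 1), |f ξ|) + 4 * K) / κ * √‖z - z₀‖ := by
  obtain rfl | hz₀ := eq_or_ne z z₀
  · simp only [sub_self, norm_zero, sqrt_zero, mul_zero, le_refl]
  have h₁ : IntegrableOn (fun ξ ↦ (f ξ : ℂ) / (ξ - z)) (Iio z₀) :=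
    integrableOn_div_sub hf hfK hκ fun ξ hξ ↦
      (mul_le_mul_of_nonneg_left (le_add_of_nonneg_left (norm_nonneg _)) hκ.le).trans (hz ξ hξ)
  have h₀ : IntegrableOn (fun ξ ↦ (f ξ : ℂ) / (ξ - z₀)) (Iio z₀) :=
    integrableOn_div_sub hf hfK one_pos fun ξ _ ↦ by
      rw [one_mul, ← Complex.ofReal_sub, Complex.norm_real, Real.norm_eq_abs, abs_sub_comm]
      exact le_abs_self _
  have hN := (h₁.sub h₀).norm
  calc ‖cauchyTransformIio f z₀ z - cauchyTransformIio f z₀ z₀‖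
      = ‖∫ ξ in Iio z₀, ((f ξ : ℂ) / (ξ - z) - f ξ / (ξ - z₀))‖ := by
        rw [cauchyTransformIio, cauchyTransformIio, integral_sub h₁ h₀]
    _ ≤ ∫ ξ in Iio z₀, ‖(f ξ : ℂ) / (ξ - z) - f ξ / (ξ - z₀)‖ :=
        norm_integral_le_integral_norm _
    _ = (∫ ξ in Iic (z₀ - 1), ‖(f ξ : ℂ) / (ξ - z) - f ξ / (ξ - z₀)‖) +
          (∫ ξ in Ioc (z₀ - 1) (z₀ - ‖z - z₀‖), ‖(f ξ : ℂ) / (ξ - z) - f ξ / (ξ - z₀)‖) +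
          ∫ ξ in Ioo (z₀ - ‖z - z₀‖) z₀, ‖(f ξ : ℂ) / (ξ - z) - f ξ / (ξ - z₀)‖ :=
        setIntegral_Iio_eq_Iic_add_Ioc_add_Ioo hN (by linarith)
          (sub_lt_self _ (norm_pos_iff.mpr (sub_ne_zero.mpr hz₀)))
    _ ≤ (∫ ξ in Iic (z₀ - 1), |f ξ|) / κ * √‖z - z₀‖ + 2 * K / κ * √‖z - z₀‖ +
          2 * K / κ * √‖z - z₀‖ := by
        gcongr
        · exact setIntegral_Iic_norm_div_sub_sub_div_sub_le hf hκ hz hN hz₁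
        · exact setIntegral_Ioc_norm_div_sub_sub_div_sub_le hfK hK hκ hz hN hz₀ hz₁
        · exact setIntegral_Ioo_norm_div_sub_sub_div_sub_le hfK hκ hz hN hz₁
    _ = ((∫ ξ in Iic (z₀ - 1), |f ξ|) + 4 * K) / κ * √‖z - z₀‖ := by ring
end

lemma norm_ofReal_mul_exp_ofReal_mul_I {s : ℝ} (hs : 0 ≤ s) (φ : ℝ) :
    ‖(s : ℂ) * cexp (φ * Complex.I)‖ = s := by
  rw [norm_mul, Complex.norm_exp_ofReal_mul_I, Complex.norm_real, Real.norm_eq_abs,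
    abs_of_nonneg hs, mul_one]

lemma norm_log_one_add_ofReal_mul_exp_le {s : ℝ} (hs : 0 ≤ s) (hs₂ : s ≤ 1 / 2) (φ : ℝ) :
    ‖Complex.log (1 + s * cexp (φ * Complex.I))‖ ≤ 3 / 2 * √s := by
  have hw := norm_ofReal_mul_exp_ofReal_mul_I hs φ
  refine (Complex.norm_log_one_add_half_le_self (hw.trans_le hs₂)).trans ?_
  rw [hw]
  gcongr
  exact le_sqrt_self_iff.mpr (by linarith)

lemma MeasureTheory.IntegrableOn.sub_indicator_Ioo_mul {ν : ℝ → ℝ} {a b : ℝ}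
    (hν : IntegrableOn ν (Iio b)) (c : ℝ) :
    IntegrableOn (fun ξ ↦ ν ξ - (Ioo a b).indicator (fun _ ↦ (1 : ℝ)) ξ * c) (Iio b) :=
  hν.sub (((integrable_indicator_iff measurableSet_Ioo).mpr
    (integrableOn_const measure_Ioo_lt_top.ne)).mul_const c).integrableOn

theorem beta_Holder_estimate_general
    (z₀ : ℝ)
    (ρ : ℝ → ℝ)
    (hint : IntegrableOn (fun ξ : ℝ => Real.log (1 - ρ ξ)) (Set.Iio z₀))
    (ν : ℝ → ℝ) (hν : ∀ ξ : ℝ, ν ξ = -(1 / (2 * Real.pi)) * Real.log (1 - ρ ξ))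
    (K : ℝ) (hK0 : 0 ≤ K)
    (hK : ∀ ξ ∈ Set.Ioo (z₀ - 1) z₀, |ν ξ - ν z₀| ≤ K * Real.sqrt (z₀ - ξ))
    (β : ℂ → ℂ)
    (hβ : ∀ z : ℂ, β z =
      -(ν z₀ : ℂ) * Complex.log (z - (z₀ : ℂ) + 1) +
        ∫ ξ in Set.Iio z₀,
          ((ν ξ - Set.indicator (Set.Ioo (z₀ - 1) z₀) (fun _ => (1:ℝ)) ξ * ν z₀ : ℝ) : ℂ)
            / ((ξ : ℂ) - z))
    (φ : ℝ) (hφ1 : 0 < φ) (hφ2 : φ < Real.pi) :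
    ∃ C > (0:ℝ), ∀ s : ℝ, 0 < s → s ≤ 1 / 2 →
      ‖β ((z₀ : ℂ) + (s : ℂ) * Complex.exp ((φ : ℂ) * Complex.I)) - β (z₀ : ℂ)‖
        ≤ C * Real.sqrt s := by
  set f : ℝ → ℝ := fun ξ ↦ ν ξ - (Ioo (z₀ - 1) z₀).indicator (fun _ ↦ (1 : ℝ)) ξ * ν z₀
  have hf : IntegrableOn f (Iio z₀) := by
    refine IntegrableOn.sub_indicator_Ioo_mul ?_ _
    rw [funext hν]
    exact hint.const_mul _
  have hfK : ∀ ξ ∈ Ioo (z₀ - 1) z₀, |f ξ| ≤ K * √(z₀ - ξ) := fun ξ hξ ↦ by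
    simpa [f, indicator_of_mem hξ] using hK ξ hξ
  have hκ : 0 < cos (φ / 2) := cos_pos_of_mem_Ioo ⟨by linarith [pi_pos], by linarith⟩
  set I := ∫ ξ in Iic (z₀ - 1), |f ξ|
  refine ⟨3 / 2 * |ν z₀| + (I + 4 * K) / cos (φ / 2) + 1, by positivity, fun s hs hs₂ ↦ ?_⟩
  set z : ℂ := z₀ + s * cexp (φ * Complex.I)
  have hdist : ‖z - z₀‖ = s := by
    rw [add_sub_cancel_left, norm_ofReal_mul_exp_ofReal_mul_I hs.le]
  have hCT := norm_cauchyTransformIio_sub_le hf hfK hK0 hκ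
    (fun ξ _ ↦ by rw [hdist]; exact cos_half_mul_le_norm_sub ξ z₀ s φ) (by linarith)
  rw [hdist] at hCT
  have hβz : β z - β z₀ = -(ν z₀ : ℂ) * Complex.log (1 + s * cexp (φ * Complex.I)) +
      (cauchyTransformIio f z₀ z - cauchyTransformIio f z₀ z₀) := by
    have hβf : ∀ w, β w =
        -(ν z₀ : ℂ) * Complex.log (w - z₀ + 1) + cauchyTransformIio f z₀ w := hβ
    rw [hβf, hβf, sub_self, zero_add, Complex.log_one, mul_zero, zero_add, add_sub_cancel_left,
      add_comm _ (1 : ℂ), add_sub_assoc]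
  rw [hβz]
  calc _ ≤ |ν z₀| * (3 / 2 * √s) + (I + 4 * K) / cos (φ / 2) * √s := by
        refine (norm_add_le _ _).trans (add_le_add ?_ hCT)
        rw [norm_mul, norm_neg, Complex.norm_real, Real.norm_eq_abs]
        exact mul_le_mul_of_nonneg_left (norm_log_one_add_ofReal_mul_exp_le hs.le hs₂ φ)
          (abs_nonneg _)
    _ ≤ (3 / 2 * |ν z₀| + (I + 4 * K) / cos (φ / 2) + 1) * √s := by
        nlinarith [sqrt_nonneg s]

/-- The key estimate |β(z, z₀) − β(z₀, z₀)| = O(√(z − z₀)) along a ray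
z = z₀ + s e^{iφ}, φ ∈ (0, π), underlying Theorem 4.1(iv) and Lemma 5.1. -/
theorem beta_Holder_estimate
    (c : ℝ) (hc0 : 0 ≤ c) (hc1 : c < 1) (z₀ : ℝ)
    (ρ : ℝ → ℝ) (hρm : Measurable ρ)
    (hρ : ∀ ξ : ℝ, 0 ≤ ρ ξ ∧ ρ ξ ≤ c)
    (hint : IntegrableOn (fun ξ : ℝ => Real.log (1 - ρ ξ)) (Set.Iio z₀))
    (ν : ℝ → ℝ) (hν : ∀ ξ : ℝ, ν ξ = -(1 / (2 * Real.pi)) * Real.log (1 - ρ ξ))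
    (K : ℝ) (hK0 : 0 ≤ K)
    (hK : ∀ ξ ∈ Set.Ioo (z₀ - 1) z₀, |ν ξ - ν z₀| ≤ K * Real.sqrt (z₀ - ξ))
    (β : ℂ → ℂ)
    (hβ : ∀ z : ℂ, β z =
      -(ν z₀ : ℂ) * Complex.log (z - (z₀ : ℂ) + 1) +
        ∫ ξ in Set.Iio z₀,
          ((ν ξ - Set.indicator (Set.Ioo (z₀ - 1) z₀) (fun _ => (1:ℝ)) ξ * ν z₀ : ℝ) : ℂ)
            / ((ξ : ℂ) - z))
    (φ : ℝ) (hφ1 : 0 < φ) (hφ2 : φ < Real.pi) :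
    ∃ C > (0:ℝ), ∀ s : ℝ, 0 < s → s ≤ 1 / 2 →
      ‖β ((z₀ : ℂ) + (s : ℂ) * Complex.exp ((φ : ℂ) * Complex.I)) - β (z₀ : ℂ)‖
        ≤ C * Real.sqrt s :=
  beta_Holder_estimate_general z₀ ρ hint ν hν K hK0 hK β hβ φ hφ1 hφ2
end

section
/- Let x < z₀ and assume ρ is continuous at x. Then the jump relation δ₊(x) = δ₋(x)(1 − ρ(x)) holds in the sense of limits: the ratio δ(x + iε)/δ(x − iε) tends to 1 − ρ(x) as ε → 0 from the right. -/
open MeasureTheory Filter Topology Set Real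

/-! For `ε > 0` the quotient `δ(x + iε) / δ(x - iε)` is
`exp (i ∫ ν(ξ) ((ξ - x - iε)⁻¹ - (ξ - x + iε)⁻¹) dξ)`, and
`i ((t - iε)⁻¹ - (t + iε)⁻¹) = -2π P_ε(t)` with `P_ε(t) = ε / (π (t² + ε²))` the Poisson kernel of
the upper half-plane. `P_ε(· - x)` is an approximate identity at `x` (nonnegative, mass
`2 arctan (r / ε) / π → 1` on `(x - r, x + r)`, uniformly small away from `x`), so the exponent
tends to `-2π ν(x) = log (1 - ρ(x))`. -/

noncomputable def halfPlanePoissonKernel (ε t : ℝ) : ℝ := ε / (π * (t ^ 2 + ε ^ 2))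

section PoissonKernel

variable {ε : ℝ}

theorem halfPlanePoissonKernel_nonneg (hε : 0 ≤ ε) (t : ℝ) :
    0 ≤ halfPlanePoissonKernel ε t :=
  div_nonneg hε (by positivity)

theorem continuous_halfPlanePoissonKernel (hε : ε ≠ 0) :
    Continuous (halfPlanePoissonKernel ε) :=
  continuous_const.div (by fun_prop) fun t => by positivity

theorem hasDerivAt_arctan_div_div_pi (hε : ε ≠ 0) (x ξ : ℝ) :
    HasDerivAt (fun y => arctan ((y - x) / ε) / π) (halfPlanePoissonKernel ε (ξ - x)) ξ := by
  refine ((((hasDerivAt_id' ξ).sub_const x).div_const ε).arctan.div_const π).congr_deriv ?_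
  unfold halfPlanePoissonKernel
  field_simp
  ring

theorem integral_Ioo_halfPlanePoissonKernel (hε : 0 < ε) (x : ℝ) {r : ℝ} (hr : 0 ≤ r) :
    ∫ ξ in Ioo (x - r) (x + r), halfPlanePoissonKernel ε (ξ - x)
      = 2 * arctan (r / ε) / π := by
  have hcont := (continuous_halfPlanePoissonKernel hε.ne').comp (continuous_sub_right x)
  rw [← integral_Ioc_eq_integral_Ioo, ← intervalIntegral.integral_of_le (by linarith),
    intervalIntegral.integral_eq_sub_of_hasDerivAt
      (fun ξ _ => hasDerivAt_arctan_div_div_pi hε.ne' x ξ) (hcont.intervalIntegrable _ _)]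
  simp only [add_sub_cancel_left, sub_sub_cancel_left, neg_div, arctan_neg]
  ring

theorem tendsto_integral_Ioo_halfPlanePoissonKernel (x : ℝ) {r : ℝ} (hr : 0 < r) :
    Tendsto (fun ε => ∫ ξ in Ioo (x - r) (x + r), halfPlanePoissonKernel ε (ξ - x))
      (𝓝[>] 0) (𝓝 1) := by
  have h_div : Tendsto (fun ε => r / ε) (𝓝[>] 0) atTop := by
    simpa only [div_eq_mul_inv] using tendsto_inv_nhdsGT_zero.const_mul_atTop hr
  have h_arctan := ((tendsto_arctan_atTop.mono_right nhdsWithin_le_nhds).comp h_div).const_mul 2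
    |>.div_const π
  rw [show 2 * (π / 2) / π = 1 by field_simp] at h_arctan
  refine h_arctan.congr' ?_
  filter_upwards [self_mem_nhdsWithin] with ε hε
  exact (integral_Ioo_halfPlanePoissonKernel hε x hr.le).symm

theorem tendstoUniformlyOn_halfPlanePoissonKernel_compl {x : ℝ} {u : Set ℝ}
    (hu : u ∈ 𝓝 x) :
    TendstoUniformlyOn (fun ε ξ => halfPlanePoissonKernel ε (ξ - x)) 0 (𝓝[>] 0) uᶜ := by
  obtain ⟨r, hr, hball⟩ := Metric.mem_nhds_iff.1 hu
  rw [Metric.tendstoUniformlyOn_iff]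
  intro η hη
  filter_upwards [Ioo_mem_nhdsGT (show 0 < η * (π * r ^ 2) by positivity)] with ε hε ξ hξ
  have hr_le : r ^ 2 ≤ (ξ - x) ^ 2 := by
    have : r ≤ |ξ - x| := by
      by_contra! h
      exact hξ (hball (by rwa [Metric.mem_ball, Real.dist_eq]))
    simpa only [sq_abs] using pow_le_pow_left₀ hr.le this 2
  rw [Pi.zero_apply, dist_zero_left, Real.norm_of_nonneg
    (halfPlanePoissonKernel_nonneg hε.1.le _)]
  calc halfPlanePoissonKernel ε (ξ - x) ≤ ε / (π * r ^ 2) := by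
        unfold halfPlanePoissonKernel
        gcongr
        · exact hε.1.le
        · nlinarith
    _ < η := by rw [div_lt_iff₀ (by positivity)]; exact hε.2

theorem tendsto_setIntegral_halfPlanePoissonKernel_smul {E : Type*} [NormedAddCommGroup E]
    [NormedSpace ℝ E] [CompleteSpace E] {s : Set ℝ} (hs : MeasurableSet s) {x : ℝ}
    (hsx : s ∈ 𝓝 x) {f : ℝ → E} (hf : IntegrableOn f s) (hfx : ContinuousAt f x) :
    Tendsto (fun ε => ∫ ξ in s, halfPlanePoissonKernel ε (ξ - x) • f ξ)
      (𝓝[>] 0) (𝓝 (f x)) := by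
  obtain ⟨r, hr, hball⟩ := Metric.mem_nhds_iff.1 hsx
  have hball_eq : Metric.ball x r = Ioo (x - r) (x + r) := Real.ball_eq_Ioo x r
  rw [hball_eq] at hball
  refine tendsto_setIntegral_peak_smul_of_integrableOn_of_tendsto hs measurableSet_Ioo hball
    (mem_nhdsWithin_of_mem_nhds (hball_eq ▸ Metric.ball_mem_nhds x hr))
    measure_Ioo_lt_top.ne ?_
    (fun u hu hxu => (tendstoUniformlyOn_halfPlanePoissonKernel_compl
      (hu.mem_nhds hxu)).mono fun ξ hξ => hξ.2)
    (tendsto_integral_Ioo_halfPlanePoissonKernel x hr) ?_ hf hfx.continuousWithinAt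
  · filter_upwards [self_mem_nhdsWithin] with ε (hε : 0 < ε) ξ _
    exact halfPlanePoissonKernel_nonneg hε.le _
  · filter_upwards [self_mem_nhdsWithin] with ε (hε : 0 < ε)
    exact ((continuous_halfPlanePoissonKernel hε.ne').comp
      (continuous_sub_right x)).aestronglyMeasurable

end PoissonKernel

open Complex in
theorem I_mul_inv_sub_inv_eq_halfPlanePoissonKernel (t ε : ℝ) :
    I * (((t : ℂ) - I * ε)⁻¹ - ((t : ℂ) + I * ε)⁻¹)
      = ((-(2 * π) * halfPlanePoissonKernel ε t : ℝ) : ℂ) := by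
  rcases eq_or_ne ε 0 with rfl | hε
  · simp [halfPlanePoissonKernel]
  have hnorm : ((t : ℂ) - I * ε) * ((t : ℂ) + I * ε) = ((t ^ 2 + ε ^ 2 : ℝ) : ℂ) := by
    push_cast; ring_nf; rw [I_sq]; ring
  have hne : ((t ^ 2 + ε ^ 2 : ℝ) : ℂ) ≠ 0 := by
    exact_mod_cast (by positivity : t ^ 2 + ε ^ 2 ≠ 0)
  have hminus : (t : ℂ) - I * ε ≠ 0 := left_ne_zero_of_mul (hnorm ▸ hne)
  have hplus : (t : ℂ) + I * ε ≠ 0 := right_ne_zero_of_mul (hnorm ▸ hne)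
  rw [inv_sub_inv hminus hplus, hnorm]
  simp only [halfPlanePoissonKernel]
  push_cast
  field_simp
  ring_nf
  rw [I_sq]
  ring

theorem integrableOn_div_sub_of_im_ne_zero {μ : Measure ℝ} {s : Set ℝ} {f : ℝ → ℂ}
    (hf : IntegrableOn f s μ) {z : ℂ} (hz : z.im ≠ 0) :
    IntegrableOn (fun ξ : ℝ => f ξ / ((ξ : ℂ) - z)) s μ := by
  simp_rw [div_eq_mul_inv]
  refine hf.mul_bdd (c := |z.im|⁻¹)
    ((Complex.measurable_ofReal.sub_const z).inv.aestronglyMeasurable) ?_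
  filter_upwards with ξ
  rw [norm_inv]
  refine inv_anti₀ (abs_pos.2 hz) ?_
  simpa using Complex.abs_im_le_norm ((ξ : ℂ) - z)

open Complex in
theorem I_mul_setIntegral_div_sub_sub_eq_halfPlanePoissonKernel {μ : Measure ℝ} {s : Set ℝ}
    {ν : ℝ → ℝ} (hν : IntegrableOn ν s μ) (x : ℝ) {ε : ℝ} (hε : ε ≠ 0) :
    I * ((∫ ξ in s, (ν ξ : ℂ) / ((ξ : ℂ) - (x + I * ε)) ∂μ)
        - ∫ ξ in s, (ν ξ : ℂ) / ((ξ : ℂ) - (x - I * ε)) ∂μ)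
      = ((-(2 * π) * ∫ ξ in s, halfPlanePoissonKernel ε (ξ - x) * ν ξ ∂μ : ℝ) : ℂ) := by
  have hplus : IntegrableOn (fun ξ : ℝ => (ν ξ : ℂ) / ((ξ : ℂ) - (x + I * ε))) s μ :=
    integrableOn_div_sub_of_im_ne_zero hν.ofReal (by simpa using hε)
  have hminus : IntegrableOn (fun ξ : ℝ => (ν ξ : ℂ) / ((ξ : ℂ) - (x - I * ε))) s μ :=
    integrableOn_div_sub_of_im_ne_zero hν.ofReal (by simpa using hε)
  rw [← integral_sub hplus hminus,
    ← integral_const_mul, ← integral_const_mul, ← integral_complex_ofReal]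
  refine integral_congr_ae (Eventually.of_forall fun ξ => ?_)
  have h := I_mul_inv_sub_inv_eq_halfPlanePoissonKernel (ξ - x) ε
  push_cast at h ⊢
  rw [← mul_assoc, ← h]
  ring

theorem delta_jump_relation_general
    (c : ℝ) (hc1 : c < 1) (z₀ : ℝ)
    (ρ : ℝ → ℝ)
    (hρ : ∀ ξ : ℝ, 0 ≤ ρ ξ ∧ ρ ξ ≤ c)
    (hint : IntegrableOn (fun ξ : ℝ => Real.log (1 - ρ ξ)) (Set.Iio z₀))
    (ν : ℝ → ℝ) (hν : ∀ ξ : ℝ, ν ξ = -(1 / (2 * Real.pi)) * Real.log (1 - ρ ξ))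
    (δ : ℂ → ℂ)
    (hδ : ∀ z : ℂ, δ z =
      Complex.exp (Complex.I * ∫ ξ in Set.Iio z₀, (ν ξ : ℂ) / ((ξ : ℂ) - z)))
    (x : ℝ) (hx : x < z₀) (hcont : ContinuousAt ρ x) :
    Filter.Tendsto
      (fun ε : ℝ => δ ((x : ℂ) + Complex.I * (ε : ℂ)) / δ ((x : ℂ) - Complex.I * (ε : ℂ)))
      (nhdsWithin 0 (Set.Ioi 0)) (nhds ((1 - ρ x : ℝ) : ℂ)) := by
  have hρx : 0 < 1 - ρ x := by linarith [(hρ x).2]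
  have hν_int : IntegrableOn ν (Iio z₀) := by
    rw [funext hν]
    exact hint.const_mul _
  have hν_cont : ContinuousAt ν x := by
    rw [funext hν]
    exact ((continuousAt_const.sub hcont).log hρx.ne').const_mul _
  have hlog : -(2 * π) * ν x = log (1 - ρ x) := by
    rw [hν]
    field_simp
  have hexponent : Tendsto
      (fun ε => -(2 * π) * ∫ ξ in Iio z₀, halfPlanePoissonKernel ε (ξ - x) * ν ξ)
      (𝓝[>] 0) (𝓝 (log (1 - ρ x))) :=
    hlog ▸ (tendsto_setIntegral_halfPlanePoissonKernel_smul measurableSet_Iio (Iio_mem_nhds hx)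
      hν_int hν_cont).const_mul _
  have hlimit : Tendsto (fun ε => Complex.exp
      ((-(2 * π) * ∫ ξ in Iio z₀, halfPlanePoissonKernel ε (ξ - x) * ν ξ : ℝ) : ℂ))
      (𝓝[>] 0) (𝓝 ((1 - ρ x : ℝ) : ℂ)) := by
    rw [← exp_log hρx, Complex.ofReal_exp]
    exact (Complex.continuous_exp.tendsto _).comp
      ((Complex.continuous_ofReal.tendsto _).comp hexponent)
  refine hlimit.congr' ?_
  filter_upwards [self_mem_nhdsWithin] with ε (hε : 0 < ε)
  rw [hδ, hδ, ← Complex.exp_sub, ← mul_sub,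
    I_mul_setIntegral_div_sub_sub_eq_halfPlanePoissonKernel hν_int x hε.ne']

/-- The jump relation δ₊(x) = δ₋(x)(1 − ρ(x)) on (−∞, z₀), in the sense that
δ(x+iε)/δ(x−iε) → 1 − ρ(x) as ε → 0⁺. -/
theorem delta_jump_relation
    (c : ℝ) (hc0 : 0 ≤ c) (hc1 : c < 1) (z₀ : ℝ)
    (ρ : ℝ → ℝ) (hρm : Measurable ρ)
    (hρ : ∀ ξ : ℝ, 0 ≤ ρ ξ ∧ ρ ξ ≤ c)
    (hint : IntegrableOn (fun ξ : ℝ => Real.log (1 - ρ ξ)) (Set.Iio z₀))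
    (ν : ℝ → ℝ) (hν : ∀ ξ : ℝ, ν ξ = -(1 / (2 * Real.pi)) * Real.log (1 - ρ ξ))
    (δ : ℂ → ℂ)
    (hδ : ∀ z : ℂ, δ z =
      Complex.exp (Complex.I * ∫ ξ in Set.Iio z₀, (ν ξ : ℂ) / ((ξ : ℂ) - z)))
    (x : ℝ) (hx : x < z₀) (hcont : ContinuousAt ρ x) :
    Filter.Tendsto
      (fun ε : ℝ => δ ((x : ℂ) + Complex.I * (ε : ℂ)) / δ ((x : ℂ) - Complex.I * (ε : ℂ)))
      (nhdsWithin 0 (Set.Ioi 0)) (nhds ((1 - ρ x : ℝ) : ℂ)) :=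
  delta_jump_relation_general c hc1 z₀ ρ hρ hint ν hν δ hδ x hx hcont
end

section
/- There exists a constant C > 0 such that for every t > 0 and every τ ∈ ℝ, ∫_{0}^{∞} e^{−4 t v²} |v − τ|^{−1/2} dv ≤ C t^{−1/4}. -/
/-!
Split the kernel at distance `r = t^{-1/2}` from `τ`. Near `τ` bound the Gaussian by `1`: the
singularity `|v - τ|^{-1/2}` has integral `4√r` over `[τ - r, τ + r]`, whatever `τ` is. Away
from `τ` bound the singularity by `r^{-1/2}`, leaving the half Gaussian integral `√π / (4√t)`.
With this choice of `r` both contributions are `O(t^{-1/4})`.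
-/

open MeasureTheory Set Real

theorem lintegral_comp_abs_sub (F : ℝ → ENNReal) (τ : ℝ) :
    ∫⁻ v, F |v - τ| = 2 * ∫⁻ u in Ioi (0:ℝ), F u := by
  have hneg : ∫⁻ u in Iio (0:ℝ), F |u| = ∫⁻ u in Ioi (0:ℝ), F |u| := by
    rw [← lintegral_indicator measurableSet_Iio, ← lintegral_indicator measurableSet_Ioi,
      ← lintegral_neg_eq_self]
    congr 1 with u
    simp only [indicator, mem_Iio, mem_Ioi, neg_lt_zero, abs_neg]
  have hpos : ∫⁻ u in Ioi (0:ℝ), F |u| = ∫⁻ u in Ioi (0:ℝ), F u :=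
    setLIntegral_congr_fun measurableSet_Ioi fun u hu => by rw [abs_of_pos hu]
  calc ∫⁻ v, F |v - τ| = ∫⁻ u, F |u| := lintegral_sub_right_eq_self (fun u => F |u|) τ
    _ = (∫⁻ u in Iio (0:ℝ), F |u|) + ∫⁻ u in Ici (0:ℝ), F |u| := by
      rw [← compl_Iio, lintegral_add_compl _ measurableSet_Iio]
    _ = 2 * ∫⁻ u in Ioi (0:ℝ), F u := by
      rw [setLIntegral_congr Ioi_ae_eq_Ici.symm, hneg, hpos, two_mul]

theorem lintegral_Ioc_zero_rpow {p : ℝ} (hp : -1 < p) {r : ℝ} (hr : 0 ≤ r) :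
    ∫⁻ u in Ioc 0 r, ENNReal.ofReal (u ^ p) = ENNReal.ofReal (r ^ (p + 1) / (p + 1)) := by
  have hint : IntegrableOn (fun u : ℝ => u ^ p) (Ioc 0 r) :=
    (intervalIntegrable_iff_integrableOn_Ioc_of_le hr).mp
      (intervalIntegral.intervalIntegrable_rpow' hp)
  rw [← ofReal_integral_eq_lintegral_ofReal hint, ← intervalIntegral.integral_of_le hr,
    integral_rpow (Or.inl hp), zero_rpow (by linarith), sub_zero]
  filter_upwards [ae_restrict_mem measurableSet_Ioc] with u hu
  exact rpow_nonneg hu.1.le p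

theorem lintegral_gaussian_Ioi {b : ℝ} (hb : 0 < b) :
    ∫⁻ v in Ioi (0:ℝ), ENNReal.ofReal (exp (-b * v ^ 2))
      = ENNReal.ofReal (√(π / b) / 2) := by
  rw [← ofReal_integral_eq_lintegral_ofReal (integrableOn_Ioi_exp_neg_mul_sq_iff.mpr hb)
    (ae_of_all _ fun v => (exp_pos _).le), integral_gaussian_Ioi]

theorem ofReal_mul_rpow_le_indicator_add {p r x g : ℝ} (hp : p ≤ 0) (hr : 0 < r) (hx : 0 ≤ x)
    (hg₀ : 0 ≤ g) (hg₁ : g ≤ 1) :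
    ENNReal.ofReal (g * x ^ p)
      ≤ (Iic r).indicator (fun u => ENNReal.ofReal (u ^ p)) x + ENNReal.ofReal (r ^ p * g) := by
  by_cases hxr : x ≤ r
  · rw [indicator_of_mem (show x ∈ Iic r from hxr)]
    refine le_add_right (ENNReal.ofReal_le_ofReal ?_)
    exact mul_le_of_le_one_left (rpow_nonneg hx p) hg₁
  · rw [indicator_of_notMem (show x ∉ Iic r from hxr), zero_add, mul_comm]
    exact ENNReal.ofReal_le_ofReal <|
      mul_le_mul_of_nonneg_right (rpow_le_rpow_of_nonpos hr (not_le.mp hxr).le hp) hg₀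

theorem lintegral_mul_abs_sub_rpow_le {p r : ℝ} (hp : -1 < p) (hp₀ : p ≤ 0) (hr : 0 < r)
    {g : ℝ → ℝ} (hg₀ : ∀ v, 0 ≤ g v) (hg₁ : ∀ v, g v ≤ 1) (s : Set ℝ) (τ : ℝ) :
    ∫⁻ v in s, ENNReal.ofReal (g v * |v - τ| ^ p)
      ≤ 2 * ENNReal.ofReal (r ^ (p + 1) / (p + 1))
        + ENNReal.ofReal (r ^ p) * ∫⁻ v in s, ENNReal.ofReal (g v) := by
  set F : ℝ → ENNReal := (Iic r).indicator fun u => ENNReal.ofReal (u ^ p)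
  have hF : Measurable fun v => F |v - τ| :=
    (Measurable.indicator (by fun_prop) measurableSet_Iic).comp (by fun_prop)
  have hnear : ∫⁻ v, F |v - τ| = 2 * ENNReal.ofReal (r ^ (p + 1) / (p + 1)) := by
    rw [lintegral_comp_abs_sub, setLIntegral_indicator measurableSet_Iic, inter_comm,
      Ioi_inter_Iic, lintegral_Ioc_zero_rpow hp hr.le]
  calc ∫⁻ v in s, ENNReal.ofReal (g v * |v - τ| ^ p)
      ≤ ∫⁻ v in s, (F |v - τ| + ENNReal.ofReal (r ^ p) * ENNReal.ofReal (g v)) := by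
        refine lintegral_mono fun v => ?_
        rw [← ENNReal.ofReal_mul (rpow_nonneg hr.le p)]
        exact ofReal_mul_rpow_le_indicator_add hp₀ hr (abs_nonneg _) (hg₀ v) (hg₁ v)
    _ = (∫⁻ v in s, F |v - τ|) + ENNReal.ofReal (r ^ p) * ∫⁻ v in s, ENNReal.ofReal (g v) := by
        rw [lintegral_add_left hF, lintegral_const_mul' _ _ ENNReal.ofReal_ne_top]
    _ ≤ _ := by
        gcongr
        exact hnear ▸ setLIntegral_le_lintegral s _

theorem sqrt_pi_div_four_mul_le {t : ℝ} (ht : 0 < t) : √(π / (4 * t)) ≤ t ^ (-(1:ℝ) / 2) :=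
  calc √(π / (4 * t)) ≤ √(1 / t) := sqrt_le_sqrt <| by
        rw [div_le_div_iff₀ (by positivity) ht]; nlinarith [pi_le_four]
    _ = t ^ (-(1:ℝ) / 2) := by
        rw [sqrt_eq_rpow, one_div, inv_rpow ht.le, ← rpow_neg ht.le]; norm_num

/-- Scalar inequality from the proof of Proposition 7.1:
∫₀^∞ e^{−4tv²} |v−τ|^{−1/2} dv ≤ C t^{−1/4}, uniformly in τ ∈ ℝ. -/
theorem scalar_estimate_I1 :
    ∃ C > (0:ℝ), ∀ t : ℝ, 0 < t → ∀ τ : ℝ,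
      ∫⁻ v in Set.Ioi (0:ℝ),
          ENNReal.ofReal (Real.exp (-4 * t * v ^ 2) * |v - τ| ^ (-(1:ℝ) / 2))
        ≤ ENNReal.ofReal (C * t ^ (-(1:ℝ) / 4)) := by
  refine ⟨5, by norm_num, fun t ht τ => ?_⟩
  have key := lintegral_mul_abs_sub_rpow_le (g := fun v => exp (-(4 * t) * v ^ 2))
    (p := -(1:ℝ) / 2) (by norm_num) (by norm_num) (rpow_pos_of_pos ht (-(1:ℝ) / 2))
    (fun v => (exp_pos _).le) (fun v => exp_le_one_iff.mpr (by nlinarith [sq_nonneg v]))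
    (Ioi 0) τ
  rw [lintegral_gaussian_Ioi (by positivity)] at key
  simp only [neg_mul] at key ⊢
  have hnear :
      (t ^ (-(1:ℝ) / 2)) ^ (-(1:ℝ) / 2 + 1) / (-(1:ℝ) / 2 + 1) = 2 * t ^ (-(1:ℝ) / 4) := by
    rw [← rpow_mul ht.le]; norm_num; ring
  have hweight : (t ^ (-(1:ℝ) / 2)) ^ (-(1:ℝ) / 2) = t ^ ((1:ℝ) / 4) := by
    rw [← rpow_mul ht.le]; norm_num
  have htail : t ^ ((1:ℝ) / 4) * (√(π / (4 * t)) / 2) ≤ t ^ (-(1:ℝ) / 4) :=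
    calc t ^ ((1:ℝ) / 4) * (√(π / (4 * t)) / 2)
        ≤ t ^ ((1:ℝ) / 4) * t ^ (-(1:ℝ) / 2) := by
          gcongr; linarith [sqrt_nonneg (π / (4 * t)), sqrt_pi_div_four_mul_le ht]
      _ = t ^ (-(1:ℝ) / 4) := by rw [← rpow_add ht]; norm_num
  refine key.trans ?_
  rw [hnear, hweight, ← ENNReal.ofReal_mul (by positivity), ← ENNReal.ofReal_ofNat 2,
    ← ENNReal.ofReal_mul (by norm_num), ← ENNReal.ofReal_add (by positivity) (by positivity)]
  exact ENNReal.ofReal_le_ofReal (by linarith)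
end

section
/- For every real p with 2 < p < 4, setting q = p/(p − 1), there exists a constant C > 0 such that for every t > 0 and every τ ∈ ℝ, ∫_{0}^{∞} e^{−4 t v²} v^{(1/p) − (1/2)} |v − τ|^{(1/q) − 1} dv ≤ C t^{−1/4}. -/
/-!
Write `a = 1/p - 1/2` and `b = 1/q - 1 = -1/p`, so `a + b = -1/2`. Cauchy–Schwarz, with the
Gaussian `e^{-cv²}` (`c = 4t`) split evenly between the factors `v^a` and `|v - τ|^b`, reduces the
estimate to two integrals. The first, `∫₀^∞ v^{2a} e^{-cv²} dv`, is a Gamma integral of size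
`c^{-(2a+1)/2}`. The second, `∫ e^{-cv²} |v - τ|^{2b} dv`, is bounded uniformly in `τ` by splitting
at `|v - τ| = c^{-1/2}`: near `τ` the singularity is integrable, and away from `τ` the weight is at
most `c^{-b}`; both pieces are `O(c^{-(2b+1)/2})`. Since `a + b = -1/2`, the powers of `c` combine
to `c^{-1/4}`.
-/

open MeasureTheory Set Real
open scoped ENNReal

theorem lintegral_comp_abs (f : ℝ → ℝ≥0∞) :
    ∫⁻ x, f |x| = 2 * ∫⁻ x in Ioi 0, f x := by
  have h_pos : ∫⁻ x in Ioi 0, f |x| = ∫⁻ x in Ioi 0, f x :=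
    setLIntegral_congr_fun measurableSet_Ioi fun x hx => by rw [abs_of_pos hx]
  have h_neg : ∫⁻ x in Iic 0, f |x| = ∫⁻ x in Ioi 0, f x := by
    rw [← (Measure.measurePreserving_neg volume).setLIntegral_comp_preimage_emb
      (Homeomorph.neg ℝ).measurableEmbedding, neg_preimage, neg_Iic, neg_zero,
      ← restrict_Ioi_eq_restrict_Ici]
    simp_rw [abs_neg]
    exact h_pos
  rw [← lintegral_add_compl _ measurableSet_Ioi, compl_Ioi, h_pos, h_neg, two_mul]

theorem lintegral_ofReal_mul_le_sqrt_mul_sqrt {α : Type*} [MeasurableSpace α] {μ : Measure α}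
    {f g : α → ℝ} (hf : AEMeasurable f μ) (hg : AEMeasurable g μ) {A B : ℝ}
    (hA : ∫⁻ x, ENNReal.ofReal (f x ^ 2) ∂μ ≤ ENNReal.ofReal A)
    (hB : ∫⁻ x, ENNReal.ofReal (g x ^ 2) ∂μ ≤ ENNReal.ofReal B) :
    ∫⁻ x, ENNReal.ofReal (f x * g x) ∂μ ≤ ENNReal.ofReal (√A * √B) := by
  have h_sq (h : α → ℝ) (x : α) :
      ENNReal.ofReal |h x| ^ (2 : ℝ) = ENNReal.ofReal (h x ^ 2) := by
    rw [ENNReal.ofReal_rpow_of_nonneg (abs_nonneg _) zero_le_two, rpow_two, sq_abs]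
  have h_sqrt (A : ℝ) : ENNReal.ofReal A ^ (1 / 2 : ℝ) = ENNReal.ofReal √A := by
    rcases le_total 0 A with hA | hA
    · rw [ENNReal.ofReal_rpow_of_nonneg hA one_half_pos.le, sqrt_eq_rpow, one_div]
    · rw [ENNReal.ofReal_of_nonpos hA, sqrt_eq_zero'.mpr hA, ENNReal.ofReal_zero,
        ENNReal.zero_rpow_of_pos one_half_pos]
  calc ∫⁻ x, ENNReal.ofReal (f x * g x) ∂μ
      ≤ ∫⁻ x, ENNReal.ofReal |f x| * ENNReal.ofReal |g x| ∂μ := lintegral_mono fun x => by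
        rw [← ENNReal.ofReal_mul (abs_nonneg _), ← abs_mul]
        exact ENNReal.ofReal_le_ofReal (le_abs_self _)
    _ ≤ (∫⁻ x, ENNReal.ofReal |f x| ^ (2 : ℝ) ∂μ) ^ (1 / 2 : ℝ)
          * (∫⁻ x, ENNReal.ofReal |g x| ^ (2 : ℝ) ∂μ) ^ (1 / 2 : ℝ) :=
        ENNReal.lintegral_mul_le_Lp_mul_Lq μ HolderConjugate.two_two
          hf.abs.ennreal_ofReal hg.abs.ennreal_ofReal
    _ ≤ ENNReal.ofReal A ^ (1 / 2 : ℝ) * ENNReal.ofReal B ^ (1 / 2 : ℝ) := by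
        simp only [h_sq]
        gcongr
    _ = ENNReal.ofReal (√A * √B) := by
        rw [h_sqrt, h_sqrt, ← ENNReal.ofReal_mul (sqrt_nonneg _)]

theorem lintegral_Ioi_rpow_mul_exp_neg_mul_sq {s c : ℝ} (hs : -1 < s) (hc : 0 < c) :
    ∫⁻ v in Ioi 0, ENNReal.ofReal (v ^ s * exp (-c * v ^ 2))
      = ENNReal.ofReal (Gamma ((s + 1) / 2) / 2 * c ^ (-(s + 1) / 2)) := by
  rw [← ofReal_integral_eq_lintegral_ofReal (integrableOn_rpow_mul_exp_neg_mul_sq hc hs)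
    ((ae_restrict_mem measurableSet_Ioi).mono fun v (hv : 0 < v) => by positivity)]
  congr 1
  have h := integral_rpow_mul_exp_neg_mul_rpow two_pos hs hc
  norm_cast at h
  rw [h]
  ring

theorem lintegral_indicator_Iic_rpow_abs_sub {s δ : ℝ} (hs : -1 < s) (hδ : 0 ≤ δ) (τ : ℝ) :
    ∫⁻ v, (Iic δ).indicator (fun x => ENNReal.ofReal (x ^ s)) |v - τ|
      = ENNReal.ofReal (2 * (δ ^ (s + 1) / (s + 1))) := by
  have h_int : IntegrableOn (fun x : ℝ => x ^ s) (Ioc 0 δ) :=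
    (intervalIntegral.intervalIntegrable_rpow' hs).1
  rw [lintegral_sub_right_eq_self
      (fun u => (Iic δ).indicator (fun x => ENNReal.ofReal (x ^ s)) |u|) τ,
    lintegral_comp_abs, setLIntegral_indicator measurableSet_Iic, inter_comm, Ioi_inter_Iic,
    ← ofReal_integral_eq_lintegral_ofReal h_int
      ((ae_restrict_mem measurableSet_Ioc).mono fun x hx => rpow_nonneg hx.1.le s),
    ← intervalIntegral.integral_of_le hδ, integral_rpow (Or.inl hs),
    zero_rpow (by linarith : s + 1 ≠ 0), ENNReal.ofReal_mul zero_le_two, ENNReal.ofReal_ofNat,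
    sub_zero]

theorem lintegral_exp_neg_mul_sq_mul_abs_sub_rpow_le {s c : ℝ} (hs : -1 < s) (hs0 : s ≤ 0)
    (hc : 0 < c) (τ : ℝ) :
    ∫⁻ v, ENNReal.ofReal (exp (-c * v ^ 2) * |v - τ| ^ s)
      ≤ ENNReal.ofReal ((2 / (s + 1) + √π) * c ^ (-(s + 1) / 2)) := by
  set δ := c ^ (-(1 / 2) : ℝ)
  have hδ : 0 < δ := rpow_pos_of_pos hc _
  have hδ_rpow (x : ℝ) : δ ^ x = c ^ (-x / 2) := by
    rw [← rpow_mul hc.le]; ring_nf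
  have h_split (v : ℝ) : ENNReal.ofReal (exp (-c * v ^ 2) * |v - τ| ^ s)
      ≤ (Iic δ).indicator (fun x => ENNReal.ofReal (x ^ s)) |v - τ|
        + ENNReal.ofReal (δ ^ s * exp (-c * v ^ 2)) := by
    have h_exp : exp (-c * v ^ 2) ≤ 1 := exp_le_one_iff.mpr (by nlinarith [sq_nonneg v])
    by_cases hv : |v - τ| ≤ δ
    · rw [indicator_of_mem (mem_Iic.mpr hv)]
      exact le_add_right (ENNReal.ofReal_le_ofReal
        (mul_le_of_le_one_left (by positivity) h_exp))
    · rw [indicator_of_notMem (by simpa using hv), zero_add, mul_comm]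
      exact ENNReal.ofReal_le_ofReal (mul_le_mul_of_nonneg_right
        (rpow_le_rpow_of_nonpos hδ (not_le.mp hv).le hs0) (exp_pos _).le)
  have h_gauss : ∫⁻ v, ENNReal.ofReal (δ ^ s * exp (-c * v ^ 2))
      = ENNReal.ofReal (δ ^ s * √(π / c)) := by
    rw [← ofReal_integral_eq_lintegral_ofReal ((integrable_exp_neg_mul_sq hc).const_mul _)
      (ae_of_all _ fun v => by positivity), integral_const_mul, integral_gaussian]
  calc ∫⁻ v, ENNReal.ofReal (exp (-c * v ^ 2) * |v - τ| ^ s)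
      ≤ ∫⁻ v, ((Iic δ).indicator (fun x => ENNReal.ofReal (x ^ s)) |v - τ|
          + ENNReal.ofReal (δ ^ s * exp (-c * v ^ 2))) := lintegral_mono h_split
    _ = ENNReal.ofReal (2 * (δ ^ (s + 1) / (s + 1)) + δ ^ s * √(π / c)) := by
      rw [lintegral_add_right _ (by fun_prop), lintegral_indicator_Iic_rpow_abs_sub hs hδ.le,
        h_gauss, ← ENNReal.ofReal_add
          (mul_nonneg zero_le_two (div_nonneg (by positivity) (by linarith))) (by positivity)]
    _ = ENNReal.ofReal ((2 / (s + 1) + √π) * c ^ (-(s + 1) / 2)) := by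
      congr 1
      rw [sqrt_div' _ hc.le, sqrt_eq_rpow c, hδ_rpow, hδ_rpow, div_eq_mul_inv √π,
        ← rpow_neg hc.le, mul_left_comm, ← rpow_add hc]
      ring_nf

theorem lintegral_Ioi_exp_neg_mul_sq_mul_rpow_mul_abs_sub_rpow_le {a b c : ℝ}
    (ha : -1 / 2 < a) (hb : -1 / 2 < b) (hb0 : b ≤ 0) (hc : 0 < c) (τ : ℝ) :
    ∫⁻ v in Ioi 0, ENNReal.ofReal (exp (-c * v ^ 2) * v ^ a * |v - τ| ^ b)
      ≤ ENNReal.ofReal (√(Gamma ((2 * a + 1) / 2) / 2) * √(2 / (2 * b + 1) + √π)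
          * c ^ (-(a + b + 1) / 2)) := by
  set f : ℝ → ℝ := fun v => exp (-(c / 2) * v ^ 2) * v ^ a
  set g : ℝ → ℝ := fun v => exp (-(c / 2) * v ^ 2) * |v - τ| ^ b
  have h_exp (v : ℝ) : exp (-(c / 2) * v ^ 2) ^ 2 = exp (-c * v ^ 2) := by
    rw [← exp_nat_mul]; ring_nf
  have hf : ∫⁻ v in Ioi 0, ENNReal.ofReal (f v ^ 2)
      ≤ ENNReal.ofReal (Gamma ((2 * a + 1) / 2) / 2 * c ^ (-(2 * a + 1) / 2)) := by
    rw [← lintegral_Ioi_rpow_mul_exp_neg_mul_sq (by linarith) hc]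
    refine (setLIntegral_congr_fun measurableSet_Ioi fun v (hv : 0 < v) => ?_).le
    rw [mul_pow, h_exp, ← rpow_mul_natCast hv.le, mul_comm]
    norm_num [mul_comm a]
  have hg : ∫⁻ v in Ioi 0, ENNReal.ofReal (g v ^ 2)
      ≤ ENNReal.ofReal ((2 / (2 * b + 1) + √π) * c ^ (-(2 * b + 1) / 2)) := by
    refine (setLIntegral_le_lintegral _ _).trans (le_of_eq_of_le (lintegral_congr fun v => ?_)
      (lintegral_exp_neg_mul_sq_mul_abs_sub_rpow_le (by linarith) (by linarith) hc τ))
    rw [mul_pow, h_exp, ← rpow_mul_natCast (abs_nonneg _)]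
    norm_num [mul_comm b]
  have h_sqrt (K x : ℝ) : √(K * c ^ x) = √K * c ^ (x / 2) := by
    rw [sqrt_mul' _ (rpow_nonneg hc.le _), sqrt_eq_rpow (c ^ x), ← rpow_mul hc.le]
    ring_nf
  calc ∫⁻ v in Ioi 0, ENNReal.ofReal (exp (-c * v ^ 2) * v ^ a * |v - τ| ^ b)
      = ∫⁻ v in Ioi 0, ENNReal.ofReal (f v * g v) := by
        refine lintegral_congr fun v => ?_
        simp only [f, g]
        rw [← h_exp, sq]
        ring_nf
    _ ≤ _ := lintegral_ofReal_mul_le_sqrt_mul_sqrt (by fun_prop) (by fun_prop) hf hg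
    _ = _ := by
        rw [h_sqrt, h_sqrt, mul_mul_mul_comm, ← rpow_add hc]
        ring_nf

/-- Scalar inequality concluding the estimate of I₂ in Proposition 7.1:
for 2 < p < 4 and q = p/(p−1),
∫₀^∞ e^{−4tv²} v^{1/p−1/2} |v−τ|^{1/q−1} dv ≤ C t^{−1/4}, uniformly in τ ∈ ℝ. -/
theorem scalar_estimate_I2 :
    ∀ p : ℝ, 2 < p → p < 4 → ∀ q : ℝ, q = p / (p - 1) →
      ∃ C > (0:ℝ), ∀ t : ℝ, 0 < t → ∀ τ : ℝ,
        ∫⁻ v in Set.Ioi (0:ℝ),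
            ENNReal.ofReal (Real.exp (-4 * t * v ^ 2) * v ^ ((1:ℝ) / p - 1 / 2) *
              |v - τ| ^ ((1:ℝ) / q - 1))
          ≤ ENNReal.ofReal (C * t ^ (-(1:ℝ) / 4)) := by
  intro p hp2 _ q hq
  have hp : 0 < p := by linarith
  have hb : 1 / q - 1 = -(1 / p) := by rw [hq]; field_simp; ring
  have h_inv : 1 / p < 1 / 2 := by rw [div_lt_div_iff₀ hp two_pos]; linarith
  have h_inv_pos : 0 < 1 / p := by positivity
  set a := 1 / p - 1 / 2 with ha
  have hK₁ : 0 < Gamma ((2 * a + 1) / 2) / 2 :=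
    div_pos (Gamma_pos_of_pos (by linarith)) two_pos
  have hK₂ : 0 < 2 / (2 * -(1 / p) + 1) + √π :=
    add_pos_of_pos_of_nonneg (div_pos two_pos (by linarith)) (sqrt_nonneg _)
  refine ⟨√(Gamma ((2 * a + 1) / 2) / 2) * √(2 / (2 * -(1 / p) + 1) + √π) * 4 ^ (-(1:ℝ) / 4),
    mul_pos (mul_pos (sqrt_pos.2 hK₁) (sqrt_pos.2 hK₂)) (by positivity), fun t ht τ => ?_⟩
  calc _ = ∫⁻ v in Ioi 0,
          ENNReal.ofReal (exp (-(4 * t) * v ^ 2) * v ^ a * |v - τ| ^ (-(1 / p))) := by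
        rw [hb, neg_mul]
    _ ≤ _ := lintegral_Ioi_exp_neg_mul_sq_mul_rpow_mul_abs_sub_rpow_le (by linarith)
        (by linarith) (by linarith) (by positivity) τ
    _ = _ := by
        rw [show -(a + -(1 / p) + 1) / 2 = -(1:ℝ) / 4 by ring, mul_rpow zero_le_four ht.le]
        ring_nf
end

section
/- There exists a constant C > 0 such that for every t > 0 and every g ∈ L²(ℝ, ℂ), ∫_{v=0}^{∞} ∫_{u=v}^{∞} e^{−4 t u v} |g(u)| du dv ≤ C ‖g‖_{L²(ℝ)} t^{−3/4}. -/
/-!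
By Cauchy–Schwarz in `u`, the inner integral is at most `‖g‖₂` times the `L²(v, ∞)` norm of
`u ↦ e^{-4tvu}`, which is `(8tv)^{-1/2} e^{-4tv²}`. The remaining integral
`∫₀^∞ v^{-1/2} e^{-4tv²} dv = (4t)^{-1/4} Γ(1/4) / 2` is a Gamma integral, and the powers of `t`
combine to `t^{-3/4}` with `C = Γ(1/4) / 8`.
-/

open MeasureTheory Set Real
open scoped ENNReal

theorem lintegral_ofReal_mul_norm_le_eLpNorm_mul_eLpNorm {α E : Type*} [MeasurableSpace α]
    {μ : Measure α} [NormedAddCommGroup E] [NormedSpace ℝ E] {f : α → ℝ} {g : α → E}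
    (hf : AEStronglyMeasurable f μ) (hg : AEStronglyMeasurable g μ) :
    ∫⁻ x, ENNReal.ofReal (f x * ‖g x‖) ∂μ ≤ eLpNorm f 2 μ * eLpNorm g 2 μ :=
  calc ∫⁻ x, ENNReal.ofReal (f x * ‖g x‖) ∂μ ≤ ∫⁻ x, ‖(f • g) x‖ₑ ∂μ := by
        refine lintegral_mono fun x => ?_
        rw [Pi.smul_apply', ← ofReal_norm, norm_smul, Real.norm_eq_abs]
        gcongr
        exact le_abs_self _
    _ = eLpNorm (f • g) 1 μ := eLpNorm_one_eq_lintegral_enorm.symm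
    _ ≤ eLpNorm f 2 μ * eLpNorm g 2 μ := eLpNorm_smul_le_mul_eLpNorm hg hf

theorem lintegral_exp_neg_mul_Ioi {c : ℝ} (hc : 0 < c) (v : ℝ) :
    ∫⁻ u in Ioi v, ENNReal.ofReal (exp (-c * u)) = ENNReal.ofReal (exp (-c * v) / c) := by
  have hneg : -c < 0 := neg_neg_of_pos hc
  rw [← ofReal_integral_eq_lintegral_ofReal (integrableOn_exp_mul_Ioi hneg v)
    (ae_of_all _ fun _ => (exp_pos _).le), integral_exp_mul_Ioi hneg, neg_div_neg_eq]

theorem eLpNorm_exp_neg_mul_Ioi {c : ℝ} (hc : 0 < c) (v : ℝ) :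
    eLpNorm (fun u => exp (-c * u)) 2 (volume.restrict (Ioi v))
      = ENNReal.ofReal ((2 * c) ^ (-(1 / 2 : ℝ)) * exp (-c * v)) := by
  have hsq : ∀ u, ‖exp (-c * u)‖ₑ ^ (2 : ℝ) = ENNReal.ofReal (exp (-(2 * c) * u)) := by
    intro u
    rw [← ofReal_norm, norm_of_nonneg (exp_pos _).le, ENNReal.ofReal_rpow_of_pos (exp_pos _),
      ← exp_mul]
    ring_nf
  rw [eLpNorm_eq_lintegral_rpow_enorm_toReal two_ne_zero ENNReal.ofNat_ne_top]
  simp only [ENNReal.toReal_ofNat, hsq]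
  rw [lintegral_exp_neg_mul_Ioi (by positivity), ENNReal.ofReal_rpow_of_nonneg (by positivity)
    (by norm_num), div_rpow (exp_pos _).le (by positivity), ← exp_mul, rpow_neg (by positivity)]
  congr 1
  ring_nf

theorem integral_rpow_neg_half_mul_exp_neg_mul_sq {b : ℝ} (hb : 0 < b) :
    ∫ v in Ioi 0, v ^ (-(1 / 2 : ℝ)) * exp (-b * v ^ 2)
      = b ^ (-(1 / 4 : ℝ)) * Gamma (1 / 4) / 2 := by
  convert integral_rpow_mul_exp_neg_mul_rpow two_pos (by norm_num : (-1 : ℝ) < -(1 / 2)) hb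
    using 1
  · simp only [rpow_two]
  · norm_num; ring

theorem eight_mul_rpow_mul_four_mul_rpow {t : ℝ} (ht : 0 < t) :
    (8 * t) ^ (-(1 / 2 : ℝ)) * (4 * t) ^ (-(1 / 4 : ℝ)) = t ^ (-(3 : ℝ) / 4) / 4 := by
  have h2 : (8 : ℝ) ^ (-(1 / 2 : ℝ)) * 4 ^ (-(1 / 4 : ℝ)) = 1 / 4 := by
    rw [show (8 : ℝ) = 2 ^ (3 : ℝ) by norm_num, show (4 : ℝ) = 2 ^ (2 : ℝ) by norm_num,
      ← rpow_mul (by norm_num), ← rpow_mul (by norm_num), ← rpow_add (by norm_num)]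
    norm_num
  have ht' : t ^ (-(1 / 2 : ℝ)) * t ^ (-(1 / 4 : ℝ)) = t ^ (-(3 : ℝ) / 4) := by
    rw [← rpow_add ht]; norm_num
  rw [mul_rpow (by norm_num) ht.le, mul_rpow (by norm_num) ht.le, ← ht']
  linear_combination t ^ (-(1 / 2 : ℝ)) * t ^ (-(1 / 4 : ℝ)) * h2

theorem lintegral_rpow_mul_exp_neg_mul_sq_Ioi {a : ℝ} (ha : 0 < a) :
    ∫⁻ v in Ioi 0, ENNReal.ofReal ((2 * a * v) ^ (-(1 / 2 : ℝ)) * exp (-a * v ^ 2))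
      = ENNReal.ofReal ((2 * a) ^ (-(1 / 2 : ℝ)) * (a ^ (-(1 / 4 : ℝ)) * Gamma (1 / 4) / 2)) := by
  have hsplit : ∀ v ∈ Ioi (0 : ℝ),
      ENNReal.ofReal ((2 * a * v) ^ (-(1 / 2 : ℝ)) * exp (-a * v ^ 2))
        = ENNReal.ofReal ((2 * a) ^ (-(1 / 2 : ℝ)) * (v ^ (-(1 / 2 : ℝ)) * exp (-a * v ^ 2))) :=
    fun v hv => by rw [mul_rpow (by positivity) (le_of_lt hv), mul_assoc]
  rw [setLIntegral_congr_fun measurableSet_Ioi hsplit,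
    ← ofReal_integral_eq_lintegral_ofReal, integral_const_mul,
    integral_rpow_neg_half_mul_exp_neg_mul_sq ha]
  · exact (integrableOn_rpow_mul_exp_neg_mul_sq ha (by norm_num)).const_mul _
  · filter_upwards [self_mem_ae_restrict measurableSet_Ioi] with v hv
    exact mul_nonneg (by positivity) (mul_nonneg (rpow_nonneg (le_of_lt hv) _) (exp_pos _).le)

theorem lintegral_Ioi_exp_neg_mul_mul_norm_le {E : Type*} [NormedAddCommGroup E]
    [NormedSpace ℝ E] {a v : ℝ} (ha : 0 < a) (hv : 0 < v) {g : ℝ → E}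
    (hg : AEStronglyMeasurable g volume) :
    ∫⁻ u in Ioi v, ENNReal.ofReal (exp (-a * u * v) * ‖g u‖)
      ≤ ENNReal.ofReal ((2 * a * v) ^ (-(1 / 2 : ℝ)) * exp (-a * v ^ 2)) * eLpNorm g 2 volume := by
  have hreorder : ∀ u, -a * u * v = -(a * v) * u := fun u => by ring
  calc ∫⁻ u in Ioi v, ENNReal.ofReal (exp (-a * u * v) * ‖g u‖)
      ≤ eLpNorm (fun u => exp (-(a * v) * u)) 2 (volume.restrict (Ioi v))
          * eLpNorm g 2 (volume.restrict (Ioi v)) := by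
        simp_rw [hreorder]
        exact lintegral_ofReal_mul_norm_le_eLpNorm_mul_eLpNorm (by fun_prop) hg.restrict
    _ ≤ _ := by
        rw [eLpNorm_exp_neg_mul_Ioi (mul_pos ha hv), ← mul_assoc, neg_mul, mul_assoc a, ← sq,
          ← neg_mul]
        gcongr
        exact Measure.restrict_le_self

/-- Estimate of I₃ in Section 7:
∫₀^∞ ∫_v^∞ e^{−4tuv} |g(u)| du dv ≤ C ‖g‖_{L²} t^{−3/4}. -/
theorem I3_estimate :
    ∃ C > (0:ℝ), ∀ t : ℝ, 0 < t → ∀ g : ℝ → ℂ, MemLp g 2 →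
      ∫⁻ v in Set.Ioi (0:ℝ), ∫⁻ u in Set.Ioi v,
          ENNReal.ofReal (Real.exp (-4 * t * u * v) * ‖g u‖)
        ≤ ENNReal.ofReal (C * (eLpNorm g 2 volume).toReal * t ^ (-(3:ℝ) / 4)) := by
  refine ⟨Gamma (1 / 4) / 8, by positivity, fun t ht g hg => ?_⟩
  have h4t : 0 < 4 * t := by positivity
  calc ∫⁻ v in Ioi 0, ∫⁻ u in Ioi v, ENNReal.ofReal (exp (-4 * t * u * v) * ‖g u‖)
      ≤ ∫⁻ v in Ioi 0, ENNReal.ofReal ((2 * (4 * t) * v) ^ (-(1 / 2 : ℝ))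
          * exp (-(4 * t) * v ^ 2)) * eLpNorm g 2 volume :=
        setLIntegral_mono' measurableSet_Ioi fun v hv => by
          simpa only [neg_mul] using lintegral_Ioi_exp_neg_mul_mul_norm_le h4t hv hg.1
    _ = ENNReal.ofReal ((8 * t) ^ (-(1 / 2 : ℝ)) * ((4 * t) ^ (-(1 / 4 : ℝ)) * Gamma (1 / 4) / 2))
          * eLpNorm g 2 volume := by
        rw [lintegral_mul_const _ (by fun_prop), lintegral_rpow_mul_exp_neg_mul_sq_Ioi h4t,
          show (2 : ℝ) * (4 * t) = 8 * t by ring]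
    _ = _ := by
        rw [← ENNReal.ofReal_toReal hg.2.ne, ← ENNReal.ofReal_mul (by positivity),
          ENNReal.toReal_ofReal ENNReal.toReal_nonneg]
        congr 1
        linear_combination (Gamma (1 / 4) / 2 * (eLpNorm g 2 volume).toReal) *
          eight_mul_rpow_mul_four_mul_rpow ht
end

section
/- There exists a constant C > 0 such that for every t > 0, ∫_{v=0}^{∞} ∫_{u=v}^{∞} e^{−4 t u v} (u² + v²)^{−1/4} du dv ≤ C t^{−3/4}. -/
/-!
For `v < u` we have `4tuv ≥ 2tv² + 2tvu` and `(u² + v²)^{-1/4} ≤ u^{-1/2}`, so after extending the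
inner integral to `u > 0` it is a Gamma integral, at most `e^{-2tv²} √π (2tv)^{-1/2}`. The remaining
`∫₀^∞ v^{-1/2} e^{-2tv²} dv = Γ(1/4)/2 · (2t)^{-1/4}` is again a Gamma integral, so
`C = √π Γ(1/4) 2^{-7/4}` works.
-/

open MeasureTheory Set Real

theorem lintegral_rpow_mul_exp_neg_mul_rpow {p q b : ℝ} (hp : 0 < p) (hq : -1 < q) (hb : 0 < b) :
    ∫⁻ x in Ioi (0 : ℝ), ENNReal.ofReal (x ^ q * exp (-b * x ^ p)) =
      ENNReal.ofReal (b ^ (-(q + 1) / p) * (1 / p) * Gamma ((q + 1) / p)) := by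
  rw [← ofReal_integral_eq_lintegral_ofReal (integrableOn_rpow_mul_exp_neg_mul_rpow hq hp hb),
    integral_rpow_mul_exp_neg_mul_rpow hp hq hb]
  filter_upwards [ae_restrict_mem measurableSet_Ioi] with x hx
  exact mul_nonneg (rpow_nonneg (le_of_lt hx) _) (exp_nonneg _)

theorem rpow_neg_quarter_sq_add_sq_le {u v : ℝ} (hu : 0 < u) :
    (u ^ 2 + v ^ 2) ^ (-(1 : ℝ) / 4) ≤ u ^ (-(1 : ℝ) / 2) :=
  calc (u ^ 2 + v ^ 2) ^ (-(1 : ℝ) / 4) ≤ (u ^ 2) ^ (-(1 : ℝ) / 4) :=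
        rpow_le_rpow_of_nonpos (by positivity) (by nlinarith) (by norm_num)
    _ = u ^ (-(1 : ℝ) / 2) := by
        rw [← rpow_two, ← rpow_mul hu.le]; norm_num

theorem exp_neg_four_mul_le {t u v : ℝ} (ht : 0 ≤ t) (hv : 0 ≤ v) (hvu : v ≤ u) :
    exp (-4 * t * u * v) ≤ exp (-(2 * t) * v ^ 2) * exp (-(2 * t * v) * u) := by
  rw [← exp_add, exp_le_exp]
  nlinarith [mul_nonneg ht (mul_nonneg hv (sub_nonneg.2 hvu))]

theorem lintegral_Ioi_exp_mul_rpow_le {t v : ℝ} (ht : 0 < t) (hv : 0 < v) :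
    ∫⁻ u in Ioi v, ENNReal.ofReal (exp (-4 * t * u * v) * (u ^ 2 + v ^ 2) ^ (-(1 : ℝ) / 4)) ≤
      ENNReal.ofReal (√π * (2 * t) ^ (-(1 : ℝ) / 2)) *
        ENNReal.ofReal (v ^ (-(1 : ℝ) / 2) * exp (-(2 * t) * v ^ 2)) :=
  calc _ ≤ ∫⁻ u in Ioi 0, ENNReal.ofReal (exp (-(2 * t) * v ^ 2)) *
          ENNReal.ofReal (u ^ (-(1 : ℝ) / 2) * exp (-(2 * t * v) * u ^ (1 : ℝ))) := by
        refine (setLIntegral_mono' measurableSet_Ioi fun u (hu : v < u) => ?_).trans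
          (lintegral_mono_set (Ioi_subset_Ioi hv.le))
        have hu0 : 0 < u := hv.trans hu
        rw [← ENNReal.ofReal_mul (exp_nonneg _), rpow_one]
        refine ENNReal.ofReal_le_ofReal ?_
        calc _ ≤ (exp (-(2 * t) * v ^ 2) * exp (-(2 * t * v) * u)) * u ^ (-(1 : ℝ) / 2) :=
              mul_le_mul (exp_neg_four_mul_le ht.le hv.le hu.le)
                (rpow_neg_quarter_sq_add_sq_le hu0) (by positivity) (by positivity)
          _ = _ := by ring
    _ = ENNReal.ofReal (exp (-(2 * t) * v ^ 2)) *
          ENNReal.ofReal ((2 * t * v) ^ (-(1 : ℝ) / 2) * √π) := by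
        rw [lintegral_const_mul' _ _ ENNReal.ofReal_ne_top,
          lintegral_rpow_mul_exp_neg_mul_rpow one_pos (by norm_num) (by positivity)]
        norm_num [Gamma_one_half_eq]
    _ = _ := by
        rw [← ENNReal.ofReal_mul (exp_nonneg _), ← ENNReal.ofReal_mul (by positivity),
          mul_rpow (by positivity) hv.le]
        ring_nf

/-- Estimate of I₄ in Section 7:
∫₀^∞ ∫_v^∞ e^{−4tuv} (u²+v²)^{−1/4} du dv ≤ C t^{−3/4}. -/
theorem I4_estimate :
    ∃ C > (0:ℝ), ∀ t : ℝ, 0 < t →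
      ∫⁻ v in Set.Ioi (0:ℝ), ∫⁻ u in Set.Ioi v,
          ENNReal.ofReal (Real.exp (-4 * t * u * v) * (u ^ 2 + v ^ 2) ^ (-(1:ℝ) / 4))
        ≤ ENNReal.ofReal (C * t ^ (-(3:ℝ) / 4)) := by
  refine ⟨√π * 2 ^ (-(3 : ℝ) / 4) * (Gamma (1 / 4) / 2), by positivity, fun t ht => ?_⟩
  calc _ ≤ ∫⁻ v in Ioi 0, ENNReal.ofReal (√π * (2 * t) ^ (-(1 : ℝ) / 2)) *
          ENNReal.ofReal (v ^ (-(1 : ℝ) / 2) * exp (-(2 * t) * v ^ (2 : ℝ))) :=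
        setLIntegral_mono' measurableSet_Ioi fun v hv => by
          simpa only [rpow_two] using lintegral_Ioi_exp_mul_rpow_le ht hv
    _ = ENNReal.ofReal (√π * (2 * t) ^ (-(1 : ℝ) / 2) *
          ((2 * t) ^ (-(1 : ℝ) / 4) * (1 / 2) * Gamma (1 / 4))) := by
        rw [lintegral_const_mul' _ _ ENNReal.ofReal_ne_top,
          lintegral_rpow_mul_exp_neg_mul_rpow two_pos (by norm_num) (by positivity),
          ← ENNReal.ofReal_mul (by positivity)]
        norm_num only
    _ = _ := by
        have h2t : (2 * t) ^ (-(1 : ℝ) / 2) * (2 * t) ^ (-(1 : ℝ) / 4) =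
            2 ^ (-(3 : ℝ) / 4) * t ^ (-(3 : ℝ) / 4) := by
          rw [← rpow_add (by positivity), mul_rpow zero_le_two ht.le]
          norm_num
        congr 1
        linear_combination (√π * (Gamma (1 / 4) / 2)) * h2t
end

section
/- Let a, b ∈ ℝ, let q : ℝ → ℂ be measurable with q ∈ L¹(ℝ) and q ∈ L²(ℝ), and fix λ ∈ ℝ; set z = λ(aλ − 2b) ∈ ℝ and G(y) = ∫_{−∞}^{y} |q(s)|² ds. For a scalar c ∈ ℂ and a 2×2 complex matrix M, let e^{c σ̂₃} M denote the matrix obtained from M by multiplying its (1,2) entry by e^{2c} and its (2,1) entry by e^{−2c} (i.e. e^{cσ₃} M e^{−cσ₃}). Let H₁(y) = (λa − b)·[[0, q(y)], [conj(q(y)), 0]] − (i a/2)|q(y)|²·[[1, 0], [0, −1]]. Then there exists a unique bounded continuous function μ : ℝ → M₂(ℂ) satisfying, for every x ∈ ℝ, the Volterra integral equation μ(x) = I + ∫_{−∞}^{x} e^{−i z (x − y) σ̂₃} ( e^{−(i a/2) G(y) σ̂₃} H₁(y) · μ(y) ) dy. -/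
/-!
Since the exponents are purely imaginary, the σ̂₃-conjugations only change the phases of the
entries, so the Volterra operator `T μ = I + ∫_{-∞}^x e^{-iz(x-y)σ̂₃}(A(y) μ(y)) dy`, where
`A = e^{-(ia/2)Gσ̂₃} H₁`, satisfies `‖Tμ(x) - Tν(x)‖ ≤ ∫_{-∞}^x h(y) ‖μ(y) - ν(y)‖ dy` with
`h = ∑ |A_{ik}|` integrable; this is where `q ∈ L¹ ∩ L²` enters. With `W(x) = ∫_{-∞}^x h`, the identity `∫_{-∞}^x h W^n = W(x)^{n+1}/(n+1)`
(the fundamental theorem of calculus for the absolutely continuous `W`) turns this by induction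
into `‖Tⁿμ - Tⁿν‖ ≤ ‖h‖₁ⁿ / n! · ‖μ - ν‖`. Hence a power of `T` is a contraction of the space of
bounded continuous functions, and `T` has exactly one fixed point: the sum of the Neumann series.
-/

open MeasureTheory Matrix

/-- For a scalar c and a 2×2 matrix M, `e^{c σ̂₃} M = e^{cσ₃} M e^{−cσ₃}`:
multiply the (1,2) entry by e^{2c} and the (2,1) entry by e^{−2c}. -/
noncomputable def expSigma3Conj (c : ℂ) (M : Matrix (Fin 2) (Fin 2) ℂ) :
    Matrix (Fin 2) (Fin 2) ℂ :=
  !![M 0 0, Complex.exp (2 * c) * M 0 1; Complex.exp (-2 * c) * M 1 0, M 1 1]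

open Set Filter Topology

section Primitive
variable {E : Type*} [NormedAddCommGroup E] [NormedSpace ℝ E] {f : ℝ → E}

theorem setIntegral_Iio_eq_add_intervalIntegral (hf : Integrable f) (a x : ℝ) :
    ∫ y in Iio x, f y = (∫ y in Iio a, f y) + ∫ y in a..x, f y := by
  rw [← intervalIntegral.integral_Iic_sub_Iic hf.integrableOn hf.integrableOn,
    integral_Iic_eq_integral_Iio, integral_Iic_eq_integral_Iio, add_sub_cancel]

theorem setIntegral_Iio_eq_add_primitive (hf : Integrable f) (a : ℝ) :
    (fun x => ∫ y in Iio x, f y) = fun x => (∫ y in Iio a, f y) + ∫ y in a..x, f y :=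
  funext (setIntegral_Iio_eq_add_intervalIntegral hf a)

theorem continuous_setIntegral_Iio (hf : Integrable f) :
    Continuous fun x => ∫ y in Iio x, f y := by
  rw [setIntegral_Iio_eq_add_primitive hf 0]
  exact continuous_const.add (hf.continuous_primitive 0)

theorem tendsto_setIntegral_Iio_atBot (hf : Integrable f) :
    Tendsto (fun x => ∫ y in Iio x, f y) atBot (𝓝 0) := by
  have hlim := intervalIntegral_tendsto_integral_Iic 0 hf.integrableOn tendsto_id
  have key : ∀ x, ∫ y in Iio x, f y = (∫ y in Iio 0, f y) - ∫ y in x..0, f y := fun x => by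
    rw [setIntegral_Iio_eq_add_intervalIntegral hf 0, intervalIntegral.integral_symm]; abel
  rw [funext key]
  simpa [integral_Iic_eq_integral_Iio] using (tendsto_const_nhds (x := ∫ y in Iio 0, f y)).sub hlim

end Primitive

section Cumulative
variable {h : ℝ → ℝ}

theorem absolutelyContinuousOnInterval_setIntegral_Iio (hh : Integrable h) (a b : ℝ) :
    AbsolutelyContinuousOnInterval (fun x => ∫ y in Iio x, h y) a b := by
  rw [setIntegral_Iio_eq_add_primitive hh a]
  exact (LipschitzWith.const _).lipschitzOnWith.absolutelyContinuousOnInterval.add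
    (hh.intervalIntegrable.absolutelyContinuousOnInterval_intervalIntegral (by simp))

theorem ae_hasDerivAt_setIntegral_Iio (hh : Integrable h) :
    ∀ᵐ x, HasDerivAt (fun x => ∫ y in Iio x, h y) (h x) x := by
  filter_upwards [LocallyIntegrable.ae_hasDerivAt_integral hh.locallyIntegrable] with x hx
  rw [setIntegral_Iio_eq_add_primitive hh 0]
  exact (hx 0).const_add _

theorem AbsolutelyContinuousOnInterval.fun_pow {f : ℝ → ℝ} {a b : ℝ}
    (hf : AbsolutelyContinuousOnInterval f a b) (n : ℕ) :
    AbsolutelyContinuousOnInterval (fun x => f x ^ n) a b := by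
  induction n with
  | zero => simpa using (LipschitzWith.const (1 : ℝ)).lipschitzOnWith.absolutelyContinuousOnInterval
  | succ n ih => simpa [pow_succ] using ih.fun_mul hf

theorem intervalIntegral_mul_pow_setIntegral_Iio (hh : Integrable h) (n : ℕ) (a b : ℝ) :
    ∫ y in a..b, h y * (∫ t in Iio y, h t) ^ n =
      ((∫ t in Iio b, h t) ^ (n + 1) - (∫ t in Iio a, h t) ^ (n + 1)) / (n + 1) := by
  have hW := (absolutelyContinuousOnInterval_setIntegral_Iio hh a b).fun_pow (n + 1)
  rw [eq_div_iff (by positivity), ← hW.integral_deriv_eq_sub,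
    ← intervalIntegral.integral_mul_const]
  refine intervalIntegral.integral_congr_ae ?_
  filter_upwards [ae_hasDerivAt_setIntegral_Iio hh] with x hx _
  rw [(hx.fun_pow (n + 1)).deriv]
  push_cast
  ring

theorem MeasureTheory.Integrable.mul_setIntegral_Iio_pow (hh : Integrable h) (n : ℕ) :
    Integrable fun y => h y * (∫ t in Iio y, h t) ^ n := by
  refine hh.mul_bdd ((continuous_setIntegral_Iio hh).pow n).aestronglyMeasurable
    (c := (∫ t, ‖h t‖) ^ n) (.of_forall fun y => ?_)
  rw [norm_pow]
  gcongr
  exact (norm_integral_le_integral_norm _).trans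
    (setIntegral_le_integral hh.norm (.of_forall fun _ => norm_nonneg _))

theorem setIntegral_Iio_mul_pow_setIntegral_Iio (hh : Integrable h) (n : ℕ) (x : ℝ) :
    ∫ y in Iio x, h y * (∫ t in Iio y, h t) ^ n = (∫ t in Iio x, h t) ^ (n + 1) / (n + 1) := by
  have hleft := intervalIntegral_tendsto_integral_Iic x
    (hh.mul_setIntegral_Iio_pow n).integrableOn tendsto_id
  rw [integral_Iic_eq_integral_Iio] at hleft
  refine tendsto_nhds_unique hleft ?_
  simp_rw [intervalIntegral_mul_pow_setIntegral_Iio hh]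
  have hbot := (tendsto_setIntegral_Iio_atBot hh).pow (n + 1)
  simpa using
    ((tendsto_const_nhds (x := (∫ t in Iio x, h t) ^ (n + 1))).sub hbot).div_const ((n : ℝ) + 1)

end Cumulative

section Volterra
open BoundedContinuousFunction Nat
variable {E : Type*} [MetricSpace E] {h : ℝ → ℝ} {T : (ℝ →ᵇ E) → (ℝ →ᵇ E)}

theorem dist_iterate_apply_le_of_dist_le_setIntegral (hh : Integrable h) (h0 : ∀ y, 0 ≤ h y)
    (hT : ∀ f g x, dist (T f x) (T g x) ≤ ∫ y in Iio x, h y * dist (f y) (g y))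
    (n : ℕ) (f g : ℝ →ᵇ E) (x : ℝ) :
    dist (T^[n] f x) (T^[n] g x) ≤ (∫ t in Iio x, h t) ^ n / n ! * dist f g := by
  induction n generalizing x with
  | zero => simpa using dist_coe_le_dist x
  | succ n ih =>
    rw [Function.iterate_succ_apply', Function.iterate_succ_apply']
    calc dist (T (T^[n] f) x) (T (T^[n] g) x)
        ≤ ∫ y in Iio x, h y * dist (T^[n] f y) (T^[n] g y) := hT _ _ x
      _ ≤ ∫ y in Iio x, h y * (∫ t in Iio y, h t) ^ n * (dist f g / n !) := by
        refine integral_mono_of_nonneg (.of_forall fun y => mul_nonneg (h0 y) dist_nonneg)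
          ((hh.mul_setIntegral_Iio_pow n).mul_const _).integrableOn (.of_forall fun y => ?_)
        calc h y * dist (T^[n] f y) (T^[n] g y)
            ≤ h y * ((∫ t in Iio y, h t) ^ n / n ! * dist f g) := by gcongr; exacts [h0 y, ih y]
          _ = _ := by ring
      _ = (∫ t in Iio x, h t) ^ (n + 1) / (n + 1) ! * dist f g := by
        rw [integral_mul_const, setIntegral_Iio_mul_pow_setIntegral_Iio hh, factorial_succ]
        push_cast
        field_simp

theorem existsUnique_isFixedPt_of_dist_le_setIntegral [CompleteSpace E] [Nonempty E]
    (hh : Integrable h) (h0 : ∀ y, 0 ≤ h y)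
    (hT : ∀ f g x, dist (T f x) (T g x) ≤ ∫ y in Iio x, h y * dist (f y) (g y)) :
    ∃! f, Function.IsFixedPt T f := by
  set S := ∫ t, h t
  have hW0 : ∀ x, 0 ≤ ∫ t in Iio x, h t := fun x =>
    setIntegral_nonneg measurableSet_Iio fun y _ => h0 y
  have hWS : ∀ x, ∫ t in Iio x, h t ≤ S := fun x => setIntegral_le_integral hh (.of_forall h0)
  have : Nonempty (ℝ →ᵇ E) := ⟨const ℝ (Classical.arbitrary E)⟩
  obtain ⟨n, hn⟩ := ((FloorSemiring.tendsto_pow_div_factorial_atTop S).eventually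
    (gt_mem_nhds one_pos)).exists
  have hS : 0 ≤ S ^ n / n ! := by have := (hW0 0).trans (hWS 0); positivity
  have hcontr : ContractingWith ⟨S ^ n / n !, hS⟩ T^[n] := by
    refine ⟨hn, LipschitzWith.of_dist_le_mul fun f g => (dist_le (by positivity)).2 fun x => ?_⟩
    refine (dist_iterate_apply_le_of_dist_le_setIntegral hh h0 hT n f g x).trans ?_
    change _ ≤ S ^ n / n ! * dist f g
    gcongr
    exacts [hW0 x, hWS x]
  exact ⟨_, hcontr.isFixedPt_fixedPoint_iterate,
    fun f hf => hcontr.fixedPoint_unique (hf.iterate n)⟩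

end Volterra

section ExpSigma3

-- `![1, -1]` is the diagonal of σ₃.
theorem expSigma3Conj_apply (c : ℂ) (M : Matrix (Fin 2) (Fin 2) ℂ) (i j : Fin 2) :
    expSigma3Conj c M i j = Complex.exp (((![1, -1] i - ![1, -1] j : ℝ) : ℂ) * c) * M i j := by
  fin_cases i <;> fin_cases j <;> norm_num [expSigma3Conj]

theorem expSigma3Conj_sub (c : ℂ) (M N : Matrix (Fin 2) (Fin 2) ℂ) :
    expSigma3Conj c (M - N) = expSigma3Conj c M - expSigma3Conj c N := by
  ext i j
  simp only [expSigma3Conj_apply, Matrix.sub_apply, mul_sub]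

theorem norm_exp_ofReal_mul {c : ℂ} (hc : c.re = 0) (r : ℝ) : ‖Complex.exp (r * c)‖ = 1 := by
  rw [Complex.norm_exp, Complex.re_ofReal_mul, hc, mul_zero, Real.exp_zero]

theorem norm_expSigma3Conj_apply {c : ℂ} (hc : c.re = 0) (M : Matrix (Fin 2) (Fin 2) ℂ)
    (i j : Fin 2) : ‖expSigma3Conj c M i j‖ = ‖M i j‖ := by
  rw [expSigma3Conj_apply, norm_mul, norm_exp_ofReal_mul hc, one_mul]

theorem integrable_expSigma3Conj_apply {φ : ℝ → ℂ} (hφ : Continuous φ)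
    (hre : ∀ y, (φ y).re = 0) {H : ℝ → Matrix (Fin 2) (Fin 2) ℂ} {i j : Fin 2}
    (hH : Integrable fun y => H y i j) :
    Integrable fun y => expSigma3Conj (φ y) (H y) i j := by
  simp only [expSigma3Conj_apply]
  exact hH.bdd_mul (c := 1) (by fun_prop) (.of_forall fun y => (norm_exp_ofReal_mul (hre y) _).le)

end ExpSigma3

theorem continuous_setIntegral_Iio_exp_mul {w : ℂ} (hw : w.re = 0) {B : ℝ → ℂ}
    (hB : Integrable B) :
    Continuous fun x : ℝ => ∫ y in Iio x, Complex.exp (w * (x - y)) * B y := by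
  have hint : Integrable fun y : ℝ => Complex.exp (-w * y) * B y := by
    refine hB.bdd_mul (c := 1) (by fun_prop) (.of_forall fun y => ?_)
    rw [neg_mul_comm, ← Complex.ofReal_neg, mul_comm, norm_exp_ofReal_mul hw]
  have key : ∀ x : ℝ, ∫ y in Iio x, Complex.exp (w * (x - y)) * B y
      = Complex.exp (w * x) * ∫ y in Iio x, Complex.exp (-w * y) * B y := fun x => by
    rw [← integral_const_mul]
    refine setIntegral_congr_fun measurableSet_Iio fun y _ => ?_
    rw [← mul_assoc, ← Complex.exp_add]
    ring_nf
  rw [funext key]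
  exact (by fun_prop : Continuous fun x : ℝ => Complex.exp (w * x)).mul
    (continuous_setIntegral_Iio hint)

noncomputable def expSigma3Volterra (c : ℂ) (A μ : ℝ → Matrix (Fin 2) (Fin 2) ℂ) (x : ℝ) :
    Matrix (Fin 2) (Fin 2) ℂ :=
  of fun i j => ∫ y in Iio x, expSigma3Conj (c * ((x : ℂ) - y)) (A y * μ y) i j

section Volterra2x2
attribute [local instance] Matrix.normedAddCommGroup Matrix.normedSpace
open BoundedContinuousFunction

theorem norm_mul_apply_le {l m n α : Type*} [Fintype m] [Fintype n] [NormedRing α]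
    (A : Matrix l m α) (M : Matrix m n α) (i : l) (j : n) :
    ‖(A * M) i j‖ ≤ (∑ k, ‖A i k‖) * ‖M‖ := by
  rw [Matrix.mul_apply, Finset.sum_mul]
  refine (norm_sum_le _ _).trans (Finset.sum_le_sum fun k _ => ?_)
  exact (norm_mul_le _ _).trans (by gcongr; exact norm_entry_le_entrywise_sup_norm M)

variable {c : ℂ} {A : ℝ → Matrix (Fin 2) (Fin 2) ℂ}

theorem norm_expSigma3Conj_mul_apply_le (hc : c.re = 0) (x y : ℝ)
    (B M : Matrix (Fin 2) (Fin 2) ℂ) (i j : Fin 2) :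
    ‖expSigma3Conj (c * ((x : ℂ) - y)) (B * M) i j‖ ≤ (∑ i, ∑ k, ‖B i k‖) * ‖M‖ := by
  rw [norm_expSigma3Conj_apply (by simp [hc])]
  refine (norm_mul_apply_le B M i j).trans (mul_le_mul_of_nonneg_right ?_ (norm_nonneg M))
  exact Finset.single_le_sum (f := fun i => ∑ k, ‖B i k‖) (fun _ _ => by positivity)
    (Finset.mem_univ i)

theorem integrable_sum_sum_norm (hA : ∀ i j, Integrable fun y => A y i j) :
    Integrable fun y => ∑ i, ∑ k, ‖A y i k‖ :=
  integrable_finsetSum _ fun i _ => integrable_finsetSum _ fun k _ => (hA i k).norm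

theorem integrable_mul_apply (hA : ∀ i j, Integrable fun y => A y i j)
    (f : ℝ →ᵇ Matrix (Fin 2) (Fin 2) ℂ) (i j : Fin 2) :
    Integrable fun y => (A y * f y) i j := by
  simp only [Matrix.mul_apply]
  refine integrable_finsetSum _ fun k _ => (hA i k).mul_bdd
    ((continuous_apply_apply k j).comp f.continuous).aestronglyMeasurable (c := ‖f‖)
    (.of_forall fun y => ?_)
  exact (norm_entry_le_entrywise_sup_norm (f y)).trans (f.norm_coe_le_norm y)

theorem expSigma3Volterra_sub (hc : c.re = 0) (hA : ∀ i j, Integrable fun y => A y i j)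
    (f g : ℝ →ᵇ Matrix (Fin 2) (Fin 2) ℂ) (x : ℝ) :
    expSigma3Volterra c A f x - expSigma3Volterra c A g x = expSigma3Volterra c A ⇑(f - g) x := by
  have hint (f : ℝ →ᵇ Matrix (Fin 2) (Fin 2) ℂ) (i j : Fin 2) :
      Integrable fun y : ℝ => expSigma3Conj (c * ((x : ℂ) - y)) (A y * f y) i j :=
    integrable_expSigma3Conj_apply (by fun_prop) (fun y => by simp [hc])
      (integrable_mul_apply hA f i j)
  ext i j
  simp only [expSigma3Volterra, Matrix.sub_apply, of_apply, coe_sub, Pi.sub_apply,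
    Matrix.mul_sub, expSigma3Conj_sub]
  rw [integral_sub (hint f i j).integrableOn (hint g i j).integrableOn]

theorem norm_expSigma3Volterra_le (hc : c.re = 0) (hA : ∀ i j, Integrable fun y => A y i j)
    (f : ℝ →ᵇ Matrix (Fin 2) (Fin 2) ℂ) (x : ℝ) :
    ‖expSigma3Volterra c A f x‖ ≤ ∫ y in Iio x, (∑ i, ∑ k, ‖A y i k‖) * ‖f y‖ := by
  have hint : Integrable fun y => (∑ i, ∑ k, ‖A y i k‖) * ‖f y‖ :=
    (integrable_sum_sum_norm hA).mul_bdd f.continuous.norm.aestronglyMeasurable (c := ‖f‖)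
      (.of_forall fun y => by simpa using f.norm_coe_le_norm y)
  refine (Matrix.norm_le_iff (setIntegral_nonneg measurableSet_Iio fun y _ => by positivity)).2
    fun i j => (norm_integral_le_integral_norm _).trans ?_
  exact integral_mono_of_nonneg (.of_forall fun y => norm_nonneg _) hint.integrableOn
    (.of_forall fun y => norm_expSigma3Conj_mul_apply_le hc x y _ _ i j)

theorem norm_expSigma3Volterra_le_integral_mul (hc : c.re = 0)
    (hA : ∀ i j, Integrable fun y => A y i j) (f : ℝ →ᵇ Matrix (Fin 2) (Fin 2) ℂ) (x : ℝ) :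
    ‖expSigma3Volterra c A f x‖ ≤ (∫ y, ∑ i, ∑ k, ‖A y i k‖) * ‖f‖ := by
  have hint := (integrable_sum_sum_norm hA).mul_const ‖f‖
  rw [← integral_mul_const]
  refine (norm_expSigma3Volterra_le hc hA f x).trans ((integral_mono_of_nonneg
    (.of_forall fun y => by positivity) hint.integrableOn
    (.of_forall fun y => mul_le_mul_of_nonneg_left (f.norm_coe_le_norm y) (by positivity))).trans
    (setIntegral_le_integral hint (.of_forall fun y => by positivity)))

theorem continuous_expSigma3Volterra (hc : c.re = 0) (hA : ∀ i j, Integrable fun y => A y i j)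
    (f : ℝ →ᵇ Matrix (Fin 2) (Fin 2) ℂ) : Continuous (expSigma3Volterra c A f) := by
  refine continuous_pi fun i => continuous_pi fun j => ?_
  simp only [expSigma3Volterra, of_apply, expSigma3Conj_apply, ← mul_assoc]
  exact continuous_setIntegral_Iio_exp_mul (by rw [Complex.re_ofReal_mul, hc, mul_zero])
    (integrable_mul_apply hA f i j)

theorem existsUnique_bounded_continuous_expSigma3Volterra (hc : c.re = 0)
    (hA : ∀ i j, Integrable fun y => A y i j) (μ₀ : Matrix (Fin 2) (Fin 2) ℂ) :
    ∃! μ : ℝ → Matrix (Fin 2) (Fin 2) ℂ, Continuous μ ∧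
      (∃ C : ℝ, ∀ (x : ℝ) (i j : Fin 2), ‖μ x i j‖ ≤ C) ∧
      ∀ (x : ℝ) (i j : Fin 2), μ x i j = μ₀ i j +
        ∫ y in Iio x, expSigma3Conj (c * ((x : ℂ) - y)) (A y * μ y) i j := by
  set h := fun y => ∑ i, ∑ k, ‖A y i k‖
  let T (f : ℝ →ᵇ Matrix (Fin 2) (Fin 2) ℂ) : ℝ →ᵇ Matrix (Fin 2) (Fin 2) ℂ :=
    ofNormedAddCommGroup (fun x => μ₀ + expSigma3Volterra c A f x)
      (continuous_const.add (continuous_expSigma3Volterra hc hA f)) (‖μ₀‖ + (∫ y, h y) * ‖f‖)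
      fun x => (norm_add_le _ _).trans
        (by gcongr; exact norm_expSigma3Volterra_le_integral_mul hc hA f x)
  have hT : ∀ f g x, dist (T f x) (T g x) ≤ ∫ y in Iio x, h y * dist (f y) (g y) := by
    intro f g x
    calc dist (T f x) (T g x)
        = ‖expSigma3Volterra c A f x - expSigma3Volterra c A g x‖ := by simp [T, dist_eq_norm]
      _ ≤ ∫ y in Iio x, h y * ‖(f - g) y‖ := by
        rw [expSigma3Volterra_sub hc hA]; exact norm_expSigma3Volterra_le hc hA (f - g) x
      _ = ∫ y in Iio x, h y * dist (f y) (g y) := by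
        simp_rw [coe_sub, Pi.sub_apply, dist_eq_norm]
  have hfix (f : ℝ →ᵇ Matrix (Fin 2) (Fin 2) ℂ) : Function.IsFixedPt T f ↔
      ∀ (x : ℝ) (i j : Fin 2), f x i j = μ₀ i j +
        ∫ y in Iio x, expSigma3Conj (c * ((x : ℂ) - y)) (A y * f y) i j := by
    rw [Function.IsFixedPt, BoundedContinuousFunction.ext_iff]
    refine forall_congr' fun x => ?_
    rw [← Matrix.ext_iff]
    simp [T, expSigma3Volterra, eq_comm]
  obtain ⟨f, hf, huniq⟩ := existsUnique_isFixedPt_of_dist_le_setIntegral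
    (integrable_sum_sum_norm hA) (fun y => by positivity) hT
  refine ⟨f, ⟨f.continuous, ⟨‖f‖, fun x i j =>
    (norm_entry_le_entrywise_sup_norm _).trans (f.norm_coe_le_norm x)⟩, (hfix f).1 hf⟩, ?_⟩
  rintro μ ⟨hμ, ⟨C, hC⟩, hμeq⟩
  have hμC : ∀ x, ‖μ x‖ ≤ C := fun x =>
    (Matrix.norm_le_iff ((norm_nonneg _).trans (hC x 0 0))).2 (hC x)
  exact congrArg (⇑) (huniq (ofNormedAddCommGroup μ hμ C hμC) ((hfix _).2 hμeq))

end Volterra2x2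

theorem jost_solution_exists_unique_general (a b : ℝ) (q : ℝ → ℂ)
    (hq1 : Integrable q) (hq2 : MemLp q 2) (lam : ℝ)
    (z : ℝ)
    (G : ℝ → ℝ) (hG : ∀ y : ℝ, G y = ∫ s in Set.Iio y, ‖q s‖ ^ 2)
    (H₁ : ℝ → Matrix (Fin 2) (Fin 2) ℂ)
    (hH₁ : ∀ y : ℝ, H₁ y =
      ((lam * a - b : ℝ) : ℂ) • !![0, q y; (starRingEnd ℂ) (q y), 0] -
        (Complex.I * (a : ℂ) / 2 * ((‖q y‖ ^ 2 : ℝ) : ℂ)) • !![(1:ℂ), 0; 0, -1]) :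
    ∃! μ : ℝ → Matrix (Fin 2) (Fin 2) ℂ,
      Continuous μ ∧
      (∃ C : ℝ, ∀ (x : ℝ) (i j : Fin 2), ‖μ x i j‖ ≤ C) ∧
      ∀ (x : ℝ) (i j : Fin 2),
        μ x i j = (1 : Matrix (Fin 2) (Fin 2) ℂ) i j +
          ∫ y in Set.Iio x,
            (expSigma3Conj (-(Complex.I * (z : ℂ)) * ((x : ℂ) - (y : ℂ)))
              ((expSigma3Conj (-(Complex.I * (a : ℂ) / 2) * ((G y : ℝ) : ℂ)) (H₁ y)) * μ y)) i j := by
  have hq2' : Integrable fun y => ‖q y‖ ^ 2 := hq2.integrable_norm_pow two_ne_zero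
  have hGc : Continuous G := (continuous_setIntegral_Iio hq2').congr fun y => (hG y).symm
  have hsq : Integrable fun y => (‖q y‖ : ℂ) ^ 2 := by simpa using hq2'.ofReal (𝕜 := ℂ)
  have hconj : Integrable fun y => (starRingEnd ℂ) (q y) :=
    Complex.conjCLE.toContinuousLinearMap.integrable_comp hq1
  have hH : ∀ i j, Integrable fun y => H₁ y i j := by
    intro i j
    simp_rw [hH₁]
    fin_cases i <;> fin_cases j
    · simpa using hsq.const_mul (Complex.I * a / 2)
    · simpa using hq1.const_mul ((lam : ℂ) * a - b)
    · simpa using hconj.const_mul ((lam : ℂ) * a - b)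
    · simpa using hsq.const_mul (Complex.I * a / 2)
  exact existsUnique_bounded_continuous_expSigma3Volterra (by simp) (fun i j =>
    integrable_expSigma3Conj_apply (by fun_prop) (fun y => by simp) (hH i j)) 1

/-- Proposition 2.1 (existence and uniqueness of the Jost solution μ₋ at a real
spectral parameter λ): there is a unique bounded continuous solution of the
Volterra integral equation μ(x) = I + ∫_{−∞}^x e^{−iz(x−y)σ̂₃}(e^{−(ia/2)G(y)σ̂₃}H₁(y)·μ(y)) dy. -/
theorem jost_solution_exists_unique (a b : ℝ) (q : ℝ → ℂ) (hqm : Measurable q)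
    (hq1 : Integrable q) (hq2 : MemLp q 2) (lam : ℝ)
    (z : ℝ) (hz : z = lam * (a * lam - 2 * b))
    (G : ℝ → ℝ) (hG : ∀ y : ℝ, G y = ∫ s in Set.Iio y, ‖q s‖ ^ 2)
    (H₁ : ℝ → Matrix (Fin 2) (Fin 2) ℂ)
    (hH₁ : ∀ y : ℝ, H₁ y =
      ((lam * a - b : ℝ) : ℂ) • !![0, q y; (starRingEnd ℂ) (q y), 0] -
        (Complex.I * (a : ℂ) / 2 * ((‖q y‖ ^ 2 : ℝ) : ℂ)) • !![(1:ℂ), 0; 0, -1]) :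
    ∃! μ : ℝ → Matrix (Fin 2) (Fin 2) ℂ,
      Continuous μ ∧
      (∃ C : ℝ, ∀ (x : ℝ) (i j : Fin 2), ‖μ x i j‖ ≤ C) ∧
      ∀ (x : ℝ) (i j : Fin 2),
        μ x i j = (1 : Matrix (Fin 2) (Fin 2) ℂ) i j +
          ∫ y in Set.Iio x,
            (expSigma3Conj (-(Complex.I * (z : ℂ)) * ((x : ℂ) - (y : ℂ)))
              ((expSigma3Conj (-(Complex.I * (a : ℂ) / 2) * ((G y : ℝ) : ℂ)) (H₁ y)) * μ y)) i j :=
  jost_solution_exists_unique_general a b q hq1 hq2 lam z G hG H₁ hH₁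
end
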